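/- arXiv:1010.2288 — 8 statements merged into one kernel-verified Lean document; each statement's English description precedes it below -/
import Mathlib

section
/- Let Δ be a simplicial complex and let k > p > 0 be integers. Suppose that f_{p-1}(Δ) > 0. Then f_{p-1}(Δ) > ((k!)^{p/k} / p!) · (f_{k-1}(Δ))^{p/k}, where all quantities are interpreted as real numbers. -/
/-!
Count ordered faces: `s_j = j! f_{j-1}`. An ordered face with `j + 1` vertices is a vertex `x`
followed by an ordered face of the link of `x`, so `s_{j+1}(Δ) = ∑ₓ s_j(lk x)`. Induction on `j`,
over all complexes at once, gives `s_{j+1}^j ≤ (s_j - 1) s_j^j` for `j ≥ 1`: by induction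
`s_j(lk x)^(j-1) ≤ s_{j-1}(lk x)^j`, and `s_j(lk x) ≤ s_j(Δ) - 1` because the link misses the faces
through `x`; so `s_j(lk x) ≤ (s_j - 1)^{1/j} s_{j-1}(lk x)` for every `x`, and summing over `x`
gives the claim. Hence `j ↦ s_j^{1/j}` is antitone, strictly so at each `j ≥ 1` with
`f_{j-1} > 0`, and the theorem says exactly that `s_k^{1/k} < s_p^{1/p}`.
-/

/-- The number of faces of `Δ` with exactly `i` vertices (i.e. `f_{i-1}(Δ)`). -/
def faceCount {V : Type*} [DecidableEq V] (Δ : Finset (Finset V)) (i : ℕ) : ℕ :=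
  (Δ.filter fun s => s.card = i).card

open Finset

theorem sum_pow_succ_le_mul_sum_pow_succ {ι : Type*} (s : Finset ι) (a b : ι → ℝ) {K : ℝ}
    {n : ℕ} (hK : 0 ≤ K) (ha : ∀ i ∈ s, 0 ≤ a i) (hb : ∀ i ∈ s, 0 ≤ b i)
    (hab : ∀ i ∈ s, a i ^ (n + 1) ≤ K * b i ^ (n + 1)) :
    (∑ i ∈ s, a i) ^ (n + 1) ≤ K * (∑ i ∈ s, b i) ^ (n + 1) := by
  set c := K ^ ((n + 1 : ℕ) : ℝ)⁻¹
  have hcK : c ^ (n + 1) = K := Real.rpow_inv_natCast_pow hK n.succ_ne_zero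
  have hle : ∀ i ∈ s, a i ≤ c * b i := fun i hi => by
    have hcb : 0 ≤ c * b i := mul_nonneg (by positivity) (hb i hi)
    rw [← pow_le_pow_iff_left₀ (ha i hi) hcb n.succ_ne_zero, mul_pow, hcK]
    exact hab i hi
  calc (∑ i ∈ s, a i) ^ (n + 1) ≤ (c * ∑ i ∈ s, b i) ^ (n + 1) := by
        rw [mul_sum]
        exact pow_le_pow_left₀ (sum_nonneg ha) (sum_le_sum hle) _
    _ = K * (∑ i ∈ s, b i) ^ (n + 1) := by rw [mul_pow, hcK]

theorem Nat.pow_lt_pow_of_succ_pow_le {a : ℕ → ℕ} {p k : ℕ} (hpk : p < k)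
    (hlt : a (p + 1) ^ p < a p ^ (p + 1))
    (hle : ∀ j, p < j → a (j + 1) ^ j ≤ a j ^ (j + 1)) : a k ^ p < a p ^ k := by
  induction k, hpk using Nat.le_induction with
  | base => exact hlt
  | succ k hk ih =>
    rw [← Nat.pow_lt_pow_iff_left (n := k) (by omega)]
    calc (a (k + 1) ^ p) ^ k = (a (k + 1) ^ k) ^ p := by rw [← pow_mul, ← pow_mul, mul_comm]
      _ ≤ (a k ^ (k + 1)) ^ p := Nat.pow_le_pow_left (hle k hk) p
      _ = (a k ^ p) ^ (k + 1) := by rw [← pow_mul, ← pow_mul, mul_comm]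
      _ < (a p ^ k) ^ (k + 1) := Nat.pow_lt_pow_left ih k.succ_ne_zero
      _ = (a p ^ (k + 1)) ^ k := by rw [← pow_mul, ← pow_mul, mul_comm]

section Link

variable {V : Type*} [DecidableEq V] {Δ : Finset (Finset V)}

def link (Δ : Finset (Finset V)) (x : V) : Finset (Finset V) :=
  {F ∈ Δ | x ∉ F ∧ insert x F ∈ Δ}

def orderedFaceCount (Δ : Finset (Finset V)) (j : ℕ) : ℕ :=
  j.factorial * faceCount Δ j

theorem orderedFaceCount_pos_iff {j : ℕ} : 0 < orderedFaceCount Δ j ↔ 0 < faceCount Δ j := by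
  simp [orderedFaceCount, Nat.factorial_pos]

theorem isLowerSet_link (hΔ : IsLowerSet (Δ : Set (Finset V))) (x : V) :
    IsLowerSet (link Δ x : Set (Finset V)) := by
  intro B A hAB hB
  simp only [link, mem_coe, mem_filter] at hB ⊢
  obtain ⟨hBΔ, hxB, hxBΔ⟩ := hB
  exact ⟨hΔ hAB hBΔ, fun hxA => hxB (hAB hxA), hΔ (insert_subset_insert x hAB) hxBΔ⟩

theorem faceCount_pos_of_le (hΔ : IsLowerSet (Δ : Set (Finset V))) {i j : ℕ} (hij : i ≤ j)
    (h : 0 < faceCount Δ j) : 0 < faceCount Δ i := by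
  obtain ⟨G, hG⟩ := card_pos.1 h
  rw [mem_filter] at hG
  obtain ⟨F, hFG, hF⟩ := exists_subset_card_eq (hG.2 ▸ hij)
  exact card_pos.2 ⟨F, mem_filter.2 ⟨hΔ hFG hG.1, hF⟩⟩

theorem faceCount_link (hΔ : IsLowerSet (Δ : Set (Finset V))) (x : V) (j : ℕ) :
    faceCount (link Δ x) j = #{G ∈ Δ | #G = j + 1 ∧ x ∈ G} := by
  refine card_nbij' (insert x) (erase · x) ?_ ?_ ?_ ?_
  · intro F hF
    simp only [link, mem_coe, mem_filter] at hF ⊢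
    obtain ⟨⟨-, hxF, hxFΔ⟩, hF⟩ := hF
    exact ⟨hxFΔ, by rw [card_insert_of_notMem hxF, hF], mem_insert_self x F⟩
  · intro G hG
    simp only [link, mem_coe, mem_filter] at hG ⊢
    obtain ⟨hGΔ, hG, hxG⟩ := hG
    refine ⟨⟨hΔ (erase_subset x G) hGΔ, notMem_erase x G, ?_⟩, ?_⟩
    · rwa [insert_erase hxG]
    · rw [card_erase_of_mem hxG, hG, Nat.add_sub_cancel]
  · intro F hF
    simp only [link, mem_coe, mem_filter] at hF
    exact erase_insert hF.1.2.1
  · intro G hG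
    simp only [mem_coe, mem_filter] at hG
    exact insert_erase hG.2.2

theorem sum_faceCount_link (hΔ : IsLowerSet (Δ : Set (Finset V))) (j : ℕ) :
    ∑ x ∈ Δ.sup id, faceCount (link Δ x) j = (j + 1) * faceCount Δ (j + 1) := by
  have hcard : ∀ G ∈ {G ∈ Δ | #G = j + 1}, #{x ∈ Δ.sup id | x ∈ G} = j + 1 := by
    intro G hG
    rw [mem_filter] at hG
    have hGV : G ⊆ Δ.sup id := le_sup (f := id) hG.1
    rw [filter_mem_eq_inter, inter_eq_right.2 hGV, hG.2]
  calc ∑ x ∈ Δ.sup id, faceCount (link Δ x) j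
      = ∑ x ∈ Δ.sup id, #{G ∈ {G ∈ Δ | #G = j + 1} | x ∈ G} := by
        simp only [faceCount_link hΔ, filter_filter]
    _ = ∑ G ∈ {G ∈ Δ | #G = j + 1}, #{x ∈ Δ.sup id | x ∈ G} :=
        sum_card_bipartiteAbove_eq_sum_card_bipartiteBelow (· ∈ ·)
    _ = (j + 1) * faceCount Δ (j + 1) := by
        rw [sum_congr rfl hcard, sum_const, smul_eq_mul, mul_comm]
        rfl

theorem sum_orderedFaceCount_link (hΔ : IsLowerSet (Δ : Set (Finset V))) (j : ℕ) :
    ∑ x ∈ Δ.sup id, orderedFaceCount (link Δ x) j = orderedFaceCount Δ (j + 1) := by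
  simp only [orderedFaceCount, ← mul_sum, sum_faceCount_link hΔ, Nat.factorial_succ]
  ring

theorem faceCount_link_lt (hΔ : IsLowerSet (Δ : Set (Finset V))) (x : V) {j : ℕ} (hj : 1 ≤ j)
    (h : 0 < faceCount (link Δ x) j) : faceCount (link Δ x) j < faceCount Δ j := by
  obtain ⟨F, hF⟩ := card_pos.1 h
  simp only [link, mem_filter] at hF
  obtain ⟨⟨-, hxF, hxFΔ⟩, hFj⟩ := hF
  obtain ⟨y, hy⟩ := card_pos.1 (hFj ▸ hj)
  refine card_lt_card <| (ssubset_iff_of_subset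
    (filter_subset_filter _ (filter_subset _ _))).2 ⟨insert x (F.erase y), ?_, ?_⟩
  · refine mem_filter.2 ⟨hΔ (insert_subset_insert x (erase_subset y F)) hxFΔ, ?_⟩
    rw [card_insert_of_notMem fun hx => hxF (mem_of_mem_erase hx), card_erase_of_mem hy]
    omega
  · simp

theorem orderedFaceCount_link_lt (hΔ : IsLowerSet (Δ : Set (Finset V))) (x : V) {j : ℕ}
    (hj : 1 ≤ j) (h : 0 < orderedFaceCount (link Δ x) j) :
    orderedFaceCount (link Δ x) j < orderedFaceCount Δ j :=
  Nat.mul_lt_mul_of_pos_left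
    (faceCount_link_lt hΔ x hj (orderedFaceCount_pos_iff.1 h)) j.factorial_pos

theorem orderedFaceCount_pow_add_le_of_link (hΔ : IsLowerSet (Δ : Set (Finset V))) {j : ℕ}
    (ih : ∀ Γ : Finset (Finset V), IsLowerSet (Γ : Set (Finset V)) →
      0 < orderedFaceCount Γ (j + 1) →
        orderedFaceCount Γ (j + 1) ^ j ≤ orderedFaceCount Γ j ^ (j + 1)) :
    orderedFaceCount Δ (j + 2) ^ (j + 1) + orderedFaceCount Δ (j + 1) ^ (j + 1) ≤
      orderedFaceCount Δ (j + 1) ^ (j + 2) := by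
  set N := orderedFaceCount Δ (j + 1)
  have hlink : ∀ x ∈ Δ.sup id, (orderedFaceCount (link Δ x) (j + 1) : ℝ) ^ (j + 1) ≤
      ((N - 1 : ℕ) : ℝ) * (orderedFaceCount (link Δ x) j : ℝ) ^ (j + 1) := by
    intro x _
    rcases (orderedFaceCount (link Δ x) (j + 1)).eq_zero_or_pos with h0 | hpos
    · rw [h0, Nat.cast_zero, zero_pow j.succ_ne_zero]
      positivity
    · have hN : orderedFaceCount (link Δ x) (j + 1) ≤ N - 1 :=
        Nat.le_sub_one_of_lt (orderedFaceCount_link_lt hΔ x j.succ_pos hpos)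
      rw [pow_succ']
      exact_mod_cast Nat.mul_le_mul hN (ih _ (isLowerSet_link hΔ x) hpos)
  have key : ((∑ x ∈ Δ.sup id, orderedFaceCount (link Δ x) (j + 1) : ℕ) : ℝ) ^ (j + 1) ≤
      ((N - 1 : ℕ) : ℝ) * ((∑ x ∈ Δ.sup id, orderedFaceCount (link Δ x) j : ℕ) : ℝ) ^ (j + 1) := by
    push_cast
    exact sum_pow_succ_le_mul_sum_pow_succ _ _ _ (by positivity) (fun _ _ => by positivity)
      (fun _ _ => by positivity) hlink
  rw [sum_orderedFaceCount_link hΔ, sum_orderedFaceCount_link hΔ] at key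
  have hN : (N - 1) * N ^ (j + 1) + N ^ (j + 1) = N ^ (j + 2) := by
    rcases N.eq_zero_or_pos with h0 | hpos
    · simp [h0]
    · rw [← Nat.succ_mul, Nat.succ_eq_add_one, Nat.sub_add_cancel hpos, pow_succ' N (j + 1)]
  rw [← hN]
  exact Nat.add_le_add_right (by exact_mod_cast key) _

theorem orderedFaceCount_pow_add_le (hΔ : IsLowerSet (Δ : Set (Finset V))) (j : ℕ) :
    orderedFaceCount Δ (j + 2) ^ (j + 1) + orderedFaceCount Δ (j + 1) ^ (j + 1) ≤
      orderedFaceCount Δ (j + 1) ^ (j + 2) := by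
  induction j generalizing Δ with
  | zero =>
    refine orderedFaceCount_pow_add_le_of_link hΔ fun Γ hΓ h => ?_
    rw [pow_zero, pow_one, Nat.one_le_iff_ne_zero, ← Nat.pos_iff_ne_zero,
      orderedFaceCount_pos_iff]
    exact faceCount_pos_of_le hΓ zero_le_one (orderedFaceCount_pos_iff.1 h)
  | succ j ih =>
    exact orderedFaceCount_pow_add_le_of_link hΔ fun Γ hΓ _ =>
      (Nat.le_add_right _ _).trans (ih hΓ)

theorem orderedFaceCount_pow_lt (hΔ : IsLowerSet (Δ : Set (Finset V))) {p k : ℕ} (hp : 0 < p)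
    (hpk : p < k) (hf : 0 < faceCount Δ p) :
    orderedFaceCount Δ k ^ p < orderedFaceCount Δ p ^ k := by
  refine Nat.pow_lt_pow_of_succ_pow_le hpk ?_ fun j hj => ?_
  · obtain ⟨i, rfl⟩ : ∃ i, p = i + 1 := ⟨p - 1, by omega⟩
    have hpos : 0 < orderedFaceCount Δ (i + 1) ^ (i + 1) :=
      pow_pos (orderedFaceCount_pos_iff.2 hf) _
    exact (Nat.lt_add_of_pos_right hpos).trans_le (orderedFaceCount_pow_add_le hΔ i)
  · obtain ⟨i, rfl⟩ : ∃ i, j = i + 1 := ⟨j - 1, by omega⟩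
    exact (Nat.le_add_right _ _).trans (orderedFaceCount_pow_add_le hΔ i)

end Link

theorem stmt1 {V : Type*} [DecidableEq V] (Δ : Finset (Finset V))
    (hΔ : ∀ B ∈ Δ, ∀ A ⊆ B, A ∈ Δ)
    (k p : ℕ) (hpk : p < k) (hp : 0 < p)
    (hf : 0 < faceCount Δ p) :
    (faceCount Δ p : ℝ) >
      ((k.factorial : ℝ) ^ ((p : ℝ) / (k : ℝ)) / (p.factorial : ℝ)) *
        (faceCount Δ k : ℝ) ^ ((p : ℝ) / (k : ℝ)) := by
  have hlower : IsLowerSet (Δ : Set (Finset V)) := fun B A hAB hB => hΔ B hB A hAB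
  have hk : (0 : ℝ) < k := by exact_mod_cast hp.trans hpk
  have hroot : ((k.factorial : ℝ) * faceCount Δ k) ^ ((p : ℝ) / k) <
      p.factorial * faceCount Δ p := by
    rw [div_eq_mul_inv, Real.rpow_mul (by positivity), Real.rpow_natCast,
      Real.rpow_inv_lt_iff_of_pos (by positivity) (by positivity) hk, Real.rpow_natCast]
    exact_mod_cast orderedFaceCount_pow_lt hlower hp hpk hf
  rw [gt_iff_lt, div_mul_eq_mul_div, ← Real.mul_rpow (by positivity) (by positivity),
    div_lt_iff₀ (by positivity)]
  linarith
end

section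
/- Let Δ be a flag complex of dimension r-1 and let r ≥ k > p > 0 be integers. Then f_{p-1}(Δ) ≥ C(r,p) · C(r,k)^{-p/k} · (f_{k-1}(Δ))^{p/k}, where C(a,b) denotes the binomial coefficient and the inequality is between real numbers. -/
/-- A flag complex: every finite set of vertices all of whose 2-element subsets
are faces is itself a face. -/
def IsFlag {V : Type*} [DecidableEq V] (Δ : Finset (Finset V)) : Prop :=
  ∀ S : Finset V, (∀ v ∈ S, ({v} : Finset V) ∈ Δ) →
    (∀ a ∈ S, ∀ b ∈ S, a ≠ b → ({a, b} : Finset V) ∈ Δ) → S ∈ Δ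

/-!
Give the vertices nonnegative weights `x` and let `W_j(x)` be the sum over the faces with `j`
vertices of the product of their weights, so that `W_j` of the indicator of the vertex set is
`f_{j-1}(Δ)`. We show `(W_k / C(r,k))^p ≤ (W_p / C(r,p))^k` for all weights, by induction on the
support. If two vertices `u, v` of the support span no edge, every `W_j` is affine in
`(x_u, x_v)` without an `x_u x_v` term, so moving all the weight of `v` onto `u` at the rate that
keeps `W_k` fixed changes `W_p` linearly, and in one of the two directions it does not increase
`W_p`; vertices lying in no `k`-face are simply dropped. Otherwise the support is a clique, hence a
face with at most `r` vertices, on which `W_j` is the elementary symmetric function `e_j` of the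
weights. Padded with zeros to `r` variables, the claim becomes Maclaurin's inequality, which follows
from Newton's inequalities; these are proved by induction on the number of variables, passing to
the roots of the derivative (Rolle) and to the reciprocals of the variables.
-/

lemma pow_le_pow_of_mul_le_sq {P : ℕ → ℝ} (h0 : P 0 = 1) (hP : ∀ j, 0 ≤ P j)
    (hlc : ∀ i, P i * P (i + 2) ≤ P (i + 1) ^ 2) (hzero : ∀ j, P j = 0 → P (j + 1) = 0)
    {a b : ℕ} (hab : a ≤ b) : P b ^ a ≤ P a ^ b := by
  have hsucc : ∀ j, P (j + 1) ^ j ≤ P j ^ (j + 1) := by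
    intro j
    induction j with
    | zero => simp [h0]
    | succ j ih =>
      rcases (hP (j + 1)).eq_or_lt with hj | hj
      · rw [hzero _ hj.symm, zero_pow (by omega)]
        exact pow_nonneg (hP _) _
      refine le_of_mul_le_mul_left ?_ (pow_pos hj j)
      calc P (j + 1) ^ j * P (j + 2) ^ (j + 1)
          ≤ P j ^ (j + 1) * P (j + 2) ^ (j + 1) := by gcongr; exact pow_nonneg (hP _) _
        _ = (P j * P (j + 2)) ^ (j + 1) := by ring
        _ ≤ (P (j + 1) ^ 2) ^ (j + 1) :=
          pow_le_pow_left₀ (mul_nonneg (hP _) (hP _)) (hlc j) _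
        _ = P (j + 1) ^ j * P (j + 1) ^ (j + 1 + 1) := by ring
  obtain rfl | ha := Nat.eq_zero_or_pos a
  · simp [h0]
  induction b, hab using Nat.le_induction with
  | base => rfl
  | succ b hab ih =>
    rw [← pow_le_pow_iff_left₀ (pow_nonneg (hP _) _) (pow_nonneg (hP _) _) (by omega : b ≠ 0)]
    calc (P (b + 1) ^ a) ^ b = (P (b + 1) ^ b) ^ a := by ring
      _ ≤ (P b ^ (b + 1)) ^ a := pow_le_pow_left₀ (pow_nonneg (hP _) _) (hsucc b) a
      _ = (P b ^ a) ^ (b + 1) := by ring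
      _ ≤ (P a ^ b) ^ (b + 1) := pow_le_pow_left₀ (pow_nonneg (hP _) _) ih _
      _ = (P a ^ (b + 1)) ^ b := by ring

namespace Multiset

section CommSemiring

variable {R : Type*} [CommSemiring R]

lemma esymm_zero (s : Multiset R) : s.esymm 0 = 1 := by
  simp [esymm, powersetCard_zero_left]

lemma esymm_eq_zero_of_card_lt {s : Multiset R} {n : ℕ} (h : card s < n) : s.esymm n = 0 := by
  simp [esymm, powersetCard_eq_empty _ h]

lemma esymm_card (s : Multiset R) : s.esymm (card s) = s.prod := by
  simp [esymm, powersetCard_self]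

lemma esymm_cons (a : R) (s : Multiset R) (n : ℕ) :
    (a ::ₘ s).esymm (n + 1) = s.esymm (n + 1) + a * s.esymm n := by
  simp [esymm, powersetCard_cons, map_map, prod_cons, sum_map_mul_left]

lemma esymm_add_replicate_zero (s : Multiset R) (z n : ℕ) :
    (s + replicate z 0).esymm n = s.esymm n := by
  induction z with
  | zero => simp
  | succ z ih =>
    cases n with
    | zero => simp only [esymm_zero]
    | succ n => rw [replicate_succ, add_cons, esymm_cons, zero_mul, add_zero, ih]

end CommSemiring

lemma esymm_nonneg {R : Type*} [CommSemiring R] [PartialOrder R] [IsOrderedRing R]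
    {s : Multiset R} (hs : ∀ a ∈ s, 0 ≤ a) (n : ℕ) : 0 ≤ s.esymm n :=
  sum_nonneg fun _ hx => by
    obtain ⟨t, ht, rfl⟩ := mem_map.mp hx
    exact prod_nonneg fun a ha => hs a (mem_of_le (mem_powersetCard.mp ht).1 ha)

lemma esymm_succ_eq_zero {R : Type*} [CommSemiring R] [PartialOrder R] [IsStrictOrderedRing R]
    {s : Multiset R} (hs : ∀ a ∈ s, 0 ≤ a) {n : ℕ} (h : s.esymm n = 0) :
    s.esymm (n + 1) = 0 := by
  induction s using Multiset.induction generalizing n with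
  | empty => exact esymm_eq_zero_of_card_lt (by simp)
  | cons a t ih =>
    have ht : ∀ b ∈ t, 0 ≤ b := fun b hb => hs b (mem_cons_of_mem hb)
    cases n with
    | zero => simp [esymm_zero] at h
    | succ n =>
      rw [esymm_cons] at h ⊢
      have htn : t.esymm (n + 1) = 0 := ((add_eq_zero_iff_of_nonneg (esymm_nonneg ht _)
        (mul_nonneg (hs a (mem_cons_self a t)) (esymm_nonneg ht n))).mp h).1
      rw [ih ht htn, htn, mul_zero, add_zero]

lemma esymm_eq_prod_mul_esymm_inv {K : Type*} [Field K] {s : Multiset K}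
    (hs : ∀ a ∈ s, a ≠ 0) {j l : ℕ} (hjl : j + l = card s) :
    s.esymm l = s.prod * (s.map (·⁻¹)).esymm j := by
  induction s using Multiset.induction generalizing j l with
  | empty =>
    obtain ⟨rfl, rfl⟩ : j = 0 ∧ l = 0 := by simpa using hjl
    simp [esymm_zero]
  | cons a t ih =>
    have ha : a ≠ 0 := hs a (mem_cons_self a t)
    have ht : ∀ b ∈ t, b ≠ 0 := fun b hb => hs b (mem_cons_of_mem hb)
    rw [card_cons] at hjl
    rw [map_cons, prod_cons]
    cases l with
    | zero =>
      obtain rfl : j = card t + 1 := by omega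
      have h := ih ht (add_zero (card t))
      rw [esymm_zero] at h
      rw [esymm_zero, esymm_cons, esymm_eq_zero_of_card_lt (by simp), h]
      field_simp
      ring
    | succ l =>
      cases j with
      | zero =>
        rw [esymm_cons, esymm_eq_zero_of_card_lt (by omega), ih ht (by omega : 0 + l = card t)]
        simp [esymm_zero]
      | succ j =>
        rw [esymm_cons, esymm_cons, ih ht (by omega : j + (l + 1) = card t),
          ih ht (by omega : (j + 1) + l = card t)]
        field_simp
        ring

noncomputable def esymmMean (s : Multiset ℝ) (n : ℕ) : ℝ :=
  s.esymm n / (card s).choose n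

lemma esymmMean_zero (s : Multiset ℝ) : s.esymmMean 0 = 1 := by
  simp [esymmMean, esymm_zero]

lemma esymmMean_eq_zero_of_card_lt {s : Multiset ℝ} {n : ℕ} (h : card s < n) :
    s.esymmMean n = 0 := by
  simp [esymmMean, esymm_eq_zero_of_card_lt h]

lemma esymmMean_nonneg {s : Multiset ℝ} (hs : ∀ a ∈ s, 0 ≤ a) (n : ℕ) : 0 ≤ s.esymmMean n :=
  div_nonneg (esymm_nonneg hs n) (Nat.cast_nonneg _)

open Polynomial in
/-- By Rolle's theorem the derivative of `∏ (X - a)` is again real-rooted; its roots have the same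
symmetric means as `s`. -/
lemma exists_esymmMean_eq_of_card_eq_succ {s : Multiset ℝ} {n : ℕ} (hs : card s = n + 1) :
    ∃ t : Multiset ℝ, card t = n ∧ ∀ i ≤ n, t.esymmMean i = s.esymmMean i := by
  set f : ℝ[X] := (s.map fun a => X - C a).prod
  have hf_monic : f.Monic := monic_multiset_prod_of_monic _ _ fun a _ => monic_X_sub_C a
  have hf_deg : f.natDegree = n + 1 := by rw [natDegree_multiset_prod_X_sub_C_eq_card, hs]
  have hf_roots : f.roots = s := roots_multiset_prod_X_sub_C s
  have hf'_deg : (derivative f).natDegree = n := by simp [hf_deg]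
  have hf'_roots : card (derivative f).roots = n := by
    have := card_roots_le_derivative f
    have := card_roots' (derivative f)
    rw [hf_roots, hs] at *
    omega
  refine ⟨(derivative f).roots, hf'_roots, fun i hi => ?_⟩
  have hcoeff := coeff_derivative f (n - i)
  rw [coeff_eq_esymm_roots_of_card (by rw [hf'_roots, hf'_deg]) (by omega),
    coeff_eq_esymm_roots_of_card (by rw [hf_roots, hf_deg, hs]) (by omega), leadingCoeff_derivative,
    hf_monic.leadingCoeff, hf_deg, hf'_deg, hf_roots, show n - (n - i) = i by omega,
    show n + 1 - (n - i + 1) = i by omega] at hcoeff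
  have hesymm : ((n : ℝ) + 1) * (derivative f).roots.esymm i = ((n - i : ℕ) + 1) * s.esymm i := by
    have hsign : ((-1 : ℝ) ^ i) ≠ 0 := pow_ne_zero _ (by norm_num)
    apply mul_left_cancel₀ hsign
    push_cast at hcoeff
    linear_combination hcoeff
  have hchoose : (n.choose i : ℝ) * (n + 1) = (n + 1).choose i * ((n - i : ℕ) + 1) := by
    have := Nat.choose_mul_succ_eq n i
    rw [show n + 1 - i = n - i + 1 by omega] at this
    exact_mod_cast this
  rw [esymmMean, esymmMean, hf'_roots, hs, div_eq_div_iff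
    (Nat.cast_ne_zero.mpr (Nat.choose_pos hi).ne')
    (Nat.cast_ne_zero.mpr (Nat.choose_pos (by omega)).ne')]
  apply mul_left_cancel₀ (by positivity : (n : ℝ) + 1 ≠ 0)
  linear_combination ((n + 1).choose i : ℝ) * hesymm - s.esymm i * hchoose

lemma esymmMean_eq_prod_mul_esymmMean_inv {s : Multiset ℝ} (hs : ∀ a ∈ s, a ≠ 0) {j l : ℕ}
    (hjl : j + l = card s) : s.esymmMean l = s.prod * (s.map (·⁻¹)).esymmMean j := by
  rw [esymmMean, esymmMean, esymm_eq_prod_mul_esymm_inv hs hjl, card_map, ← hjl,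
    Nat.choose_symm_add, mul_div_assoc]

lemma esymmMean_two_le_sq (s : Multiset ℝ) : s.esymmMean 2 ≤ s.esymmMean 1 ^ 2 := by
  induction h : card s using Nat.strong_induction_on generalizing s with
  | _ n ih =>
  rcases lt_trichotomy n 2 with hn | rfl | hn
  · rw [esymmMean_eq_zero_of_card_lt (by omega)]
    positivity
  · obtain ⟨a, b, rfl⟩ := card_eq_two.mp h
    have hab : a * b ≤ ((a + b) / 2) ^ 2 := by nlinarith [sq_nonneg (a - b)]
    simpa [esymmMean] using hab
  · obtain ⟨t, ht, heq⟩ := exists_esymmMean_eq_of_card_eq_succ (by omega : card s = n - 1 + 1)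
    rw [← heq 2 (by omega), ← heq 1 (by omega)]
    exact ih _ (by omega) t ht

/-- **Newton's inequalities**. -/
theorem esymmMean_mul_le_sq (s : Multiset ℝ) (i : ℕ) :
    s.esymmMean i * s.esymmMean (i + 2) ≤ s.esymmMean (i + 1) ^ 2 := by
  induction h : card s using Nat.strong_induction_on generalizing s with
  | _ n ih =>
  rcases lt_trichotomy n (i + 2) with hn | rfl | hn
  · rw [esymmMean_eq_zero_of_card_lt (n := i + 2) (by omega), mul_zero]
    positivity
  · by_cases hs0 : (0 : ℝ) ∈ s
    · have hzero : s.esymmMean (i + 2) = 0 := by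
        rw [esymmMean, ← h, esymm_card, prod_eq_zero hs0, zero_div]
      rw [hzero, mul_zero]
      positivity
    have hs : ∀ a ∈ s, a ≠ 0 := fun a ha h0 => hs0 (h0 ▸ ha)
    -- passing to the reciprocals turns the means of orders `i, i + 1, i + 2` into those of orders
    -- `2, 1, 0`
    rw [esymmMean_eq_prod_mul_esymmMean_inv hs (by omega : 2 + i = card s),
      esymmMean_eq_prod_mul_esymmMean_inv hs (by omega : 0 + (i + 2) = card s),
      esymmMean_eq_prod_mul_esymmMean_inv hs (by omega : 1 + (i + 1) = card s), esymmMean_zero]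
    nlinarith [mul_le_mul_of_nonneg_left (esymmMean_two_le_sq (s.map (·⁻¹))) (sq_nonneg s.prod)]
  · obtain ⟨t, ht, heq⟩ := exists_esymmMean_eq_of_card_eq_succ (by omega : card s = n - 1 + 1)
    rw [← heq i (by omega), ← heq (i + 1) (by omega), ← heq (i + 2) (by omega)]
    exact ih _ (by omega) t ht

lemma esymmMean_succ_eq_zero {s : Multiset ℝ} (hs : ∀ a ∈ s, 0 ≤ a) {n : ℕ}
    (h : s.esymmMean n = 0) : s.esymmMean (n + 1) = 0 := by
  rcases lt_or_ge (card s) (n + 1) with hn | hn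
  · exact esymmMean_eq_zero_of_card_lt hn
  · have hchoose : ((card s).choose n : ℝ) ≠ 0 :=
      Nat.cast_ne_zero.mpr (Nat.choose_pos (by omega)).ne'
    rw [esymmMean, div_eq_zero_iff, or_iff_left hchoose] at h
    rw [esymmMean, esymm_succ_eq_zero hs h, zero_div]

/-- **Maclaurin's inequalities**. -/
theorem esymmMean_pow_le_pow {s : Multiset ℝ} (hs : ∀ a ∈ s, 0 ≤ a) {a b : ℕ} (hab : a ≤ b) :
    s.esymmMean b ^ a ≤ s.esymmMean a ^ b :=
  pow_le_pow_of_mul_le_sq (esymmMean_zero s) (esymmMean_nonneg hs) (esymmMean_mul_le_sq s)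
    (fun _ => esymmMean_succ_eq_zero hs) hab

theorem esymm_div_choose_pow_le_pow {s : Multiset ℝ} (hs : ∀ a ∈ s, 0 ≤ a) {r : ℕ}
    (hr : card s ≤ r) {a b : ℕ} (hab : a ≤ b) :
    (s.esymm b / r.choose b) ^ a ≤ (s.esymm a / r.choose a) ^ b := by
  have ht : ∀ x ∈ s + replicate (r - card s) 0, 0 ≤ x := by
    intro x hx
    rcases mem_add.mp hx with hx | hx
    · exact hs x hx
    · exact (eq_of_mem_replicate hx).ge
  have hcard : card (s + replicate (r - card s) 0) = r := by simp; omega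
  simpa only [esymmMean, hcard, esymm_add_replicate_zero] using esymmMean_pow_le_pow ht hab

end Multiset

open Finset Function

section FaceWeight

variable {V : Type*} {Δ : Finset (Finset V)}

variable (Δ) in
noncomputable def faceWeight (x : V → ℝ) (j : ℕ) : ℝ :=
  ∑ F ∈ Δ with F.card = j, ∏ v ∈ F, x v

lemma faceWeight_nonneg {x : V → ℝ} (hx : 0 ≤ x) (j : ℕ) : 0 ≤ faceWeight Δ x j :=
  sum_nonneg fun _ _ => prod_nonneg fun v _ => hx v

lemma faceWeight_eq_esymm (hΔ : ∀ B ∈ Δ, ∀ A ⊆ B, A ∈ Δ) {s : Finset V} (hs : s ∈ Δ)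
    {x : V → ℝ} (hx : support x ⊆ s) (j : ℕ) : faceWeight Δ x j = (s.val.map x).esymm j := by
  rw [Finset.esymm_map_val, faceWeight]
  refine (sum_subset (fun F hF => ?_) fun F hF hFs => ?_).symm
  · obtain ⟨hFs, hcard⟩ := mem_powersetCard.mp hF
    exact mem_filter.mpr ⟨hΔ s hs F hFs, hcard⟩
  · obtain ⟨v, hvF, hvs⟩ := not_subset.mp fun h =>
      hFs (mem_powersetCard.mpr ⟨h, (mem_filter.mp hF).2⟩)
    exact prod_eq_zero hvF (notMem_support.mp fun h => hvs (hx h))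

variable [DecidableEq V]

lemma faceWeight_indicator_eq_faceCount {s : Finset V} (hs : ∀ F ∈ Δ, F ⊆ s) (j : ℕ) :
    faceWeight Δ ((s : Set V).indicator 1) j = faceCount Δ j := by
  rw [faceWeight, faceCount, card_eq_sum_ones, Nat.cast_sum]
  refine sum_congr rfl fun F hF => ?_
  rw [prod_eq_one fun v hv => Set.indicator_of_mem (hs F (mem_filter.mp hF).1 hv) _, Nat.cast_one]

variable (Δ) in
/-- The partial derivative of `faceWeight Δ x j` with respect to `x u`. -/
noncomputable def linkWeight (x : V → ℝ) (j : ℕ) (u : V) : ℝ :=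
  ∑ F ∈ Δ with F.card = j ∧ u ∈ F, ∏ v ∈ F.erase u, x v

lemma linkWeight_nonneg {x : V → ℝ} (hx : 0 ≤ x) (j : ℕ) (u : V) : 0 ≤ linkWeight Δ x j u :=
  sum_nonneg fun _ _ => prod_nonneg fun v _ => hx v

lemma faceWeight_update (x : V → ℝ) (u : V) (c : ℝ) (j : ℕ) :
    faceWeight Δ (update x u c) j = faceWeight Δ x j + (c - x u) * linkWeight Δ x j u := by
  have hface (F : Finset V) : ∏ v ∈ F, update x u c v =
      ∏ v ∈ F, x v + if u ∈ F then (c - x u) * ∏ v ∈ F.erase u, x v else 0 := by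
    split_ifs with hu
    · rw [prod_update_of_mem hu, sdiff_singleton_eq_erase, ← mul_prod_erase F x hu]
      ring
    · rw [prod_update_of_notMem hu, add_zero]
  simp only [faceWeight, linkWeight, hface, sum_add_distrib, ← filter_filter, sum_filter, mul_sum,
    mul_ite, mul_zero]

lemma linkWeight_update_of_forall_not_mem {u v : V} (hno : ∀ F ∈ Δ, u ∈ F → v ∉ F)
    (x : V → ℝ) (c : ℝ) (j : ℕ) : linkWeight Δ (update x v c) j u = linkWeight Δ x j u :=
  sum_congr rfl fun F hF => by
    obtain ⟨hFΔ, -, huF⟩ := mem_filter.mp hF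
    exact prod_update_of_notMem (fun hv => hno F hFΔ huF (mem_of_mem_erase hv)) _ _

lemma faceWeight_transfer {u v : V} (huv : u ≠ v) (hno : ∀ F ∈ Δ, u ∈ F → v ∉ F)
    (x : V → ℝ) (t : ℝ) (j : ℕ) :
    faceWeight Δ (update (update x u (x u + t)) v 0) j =
      faceWeight Δ x j + t * linkWeight Δ x j u - x v * linkWeight Δ x j v := by
  rw [faceWeight_update, faceWeight_update, update_of_ne huv.symm,
    linkWeight_update_of_forall_not_mem (fun F hF hv hu => hno F hF hu hv)]
  ring

lemma exists_transfer {k p : ℕ} {x : V → ℝ} (hx : 0 ≤ x) {s : Finset V}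
    (hs : support x ⊆ s) {u v : V} (hu : u ∈ s) (huv : u ≠ v) (hno : ∀ F ∈ Δ, u ∈ F → v ∉ F)
    (hLu : 0 < linkWeight Δ x k u)
    (hD : linkWeight Δ x k v * linkWeight Δ x p u ≤ linkWeight Δ x k u * linkWeight Δ x p v) :
    ∃ y : V → ℝ, 0 ≤ y ∧ support y ⊆ ↑(s.erase v) ∧
      faceWeight Δ y k = faceWeight Δ x k ∧ faceWeight Δ y p ≤ faceWeight Δ x p := by
  set t := x v * linkWeight Δ x k v / linkWeight Δ x k u
  have ht : 0 ≤ t := div_nonneg (mul_nonneg (hx v) (linkWeight_nonneg hx k v)) hLu.le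
  refine ⟨update (update x u (x u + t)) v 0, ?_, ?_, ?_, ?_⟩
  · refine le_update_iff.mpr ⟨le_rfl, fun w _ => ?_⟩
    rcases eq_or_ne w u with rfl | hwu
    · simpa using add_nonneg (hx w) ht
    · simpa [hwu] using hx w
  · intro w hw
    rcases eq_or_ne w u with rfl | hwu
    · simp_all
    · simp_all [update_apply]
  · rw [faceWeight_transfer huv hno, div_mul_cancel₀ _ hLu.ne']
    ring
  · rw [faceWeight_transfer huv hno]
    have : t * linkWeight Δ x p u ≤ x v * linkWeight Δ x p v := by
      rw [div_mul_eq_mul_div, div_le_iff₀ hLu]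
      nlinarith [mul_le_mul_of_nonneg_left hD (hx v)]
    linarith

lemma exists_reduction_or_mem (hΔ : ∀ B ∈ Δ, ∀ A ⊆ B, A ∈ Δ) (hflag : IsFlag Δ) (k p : ℕ)
    {x : V → ℝ} (hx : 0 ≤ x) {s : Finset V} (hs : support x ⊆ s) :
    s ∈ Δ ∨ ∃ w ∈ s, ∃ y : V → ℝ, 0 ≤ y ∧ support y ⊆ ↑(s.erase w) ∧
      faceWeight Δ y k = faceWeight Δ x k ∧ faceWeight Δ y p ≤ faceWeight Δ x p := by
  by_cases hzero : ∃ u ∈ s, x u * linkWeight Δ x k u = 0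
  · obtain ⟨u, hu, h⟩ := hzero
    refine .inr ⟨u, hu, update x u 0, le_update_iff.mpr ⟨le_rfl, fun w _ => hx w⟩, ?_, ?_, ?_⟩
    · rw [Function.support_update_zero, coe_erase]
      exact Set.sdiff_subset_sdiff_left hs
    · rw [faceWeight_update, zero_sub, neg_mul, h, neg_zero, add_zero]
    · rw [faceWeight_update]
      nlinarith [mul_nonneg (hx u) (linkWeight_nonneg (Δ := Δ) hx p u)]
  push Not at hzero
  have hL : ∀ u ∈ s, 0 < linkWeight Δ x k u := fun u hu =>
    (linkWeight_nonneg hx k u).lt_of_ne fun h => hzero u hu (by rw [← h, mul_zero])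
  by_cases hpair : ∃ u ∈ s, ∃ v ∈ s, u ≠ v ∧ ({u, v} : Finset V) ∉ Δ
  · obtain ⟨u, hu, v, hv, huv, huvΔ⟩ := hpair
    have hno : ∀ F ∈ Δ, u ∈ F → v ∉ F := fun F hF huF hvF =>
      huvΔ (hΔ F hF _ (insert_subset huF (singleton_subset_iff.mpr hvF)))
    right
    rcases le_total (linkWeight Δ x k v * linkWeight Δ x p u)
      (linkWeight Δ x k u * linkWeight Δ x p v) with hD | hD
    · exact ⟨v, hv, exists_transfer hx hs hu huv hno (hL u hu) hD⟩
    · exact ⟨u, hu, exists_transfer hx hs hv huv.symm (fun F hF hvF huF => hno F hF huF hvF)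
        (hL v hv) hD⟩
  push Not at hpair
  refine .inl (hflag s (fun u hu => ?_) hpair)
  obtain ⟨F, hF, -⟩ := exists_ne_zero_of_sum_ne_zero (hL u hu).ne'
  obtain ⟨hFΔ, -, huF⟩ := mem_filter.mp hF
  exact hΔ F hFΔ {u} (singleton_subset_iff.mpr huF)

theorem faceWeight_div_choose_pow_le (hΔ : ∀ B ∈ Δ, ∀ A ⊆ B, A ∈ Δ) (hflag : IsFlag Δ) {r : ℕ}
    (hr : ∀ F ∈ Δ, F.card ≤ r) {p k : ℕ} (hpk : p ≤ k) {x : V → ℝ} (hx : 0 ≤ x) {s : Finset V}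
    (hs : support x ⊆ s) :
    (faceWeight Δ x k / r.choose k) ^ p ≤ (faceWeight Δ x p / r.choose p) ^ k := by
  induction s using Finset.strongInduction generalizing x with
  | H s ih =>
  rcases exists_reduction_or_mem hΔ hflag k p hx hs with hsΔ | ⟨w, hw, y, hy, hys, hk, hp⟩
  · rw [faceWeight_eq_esymm hΔ hsΔ hs, faceWeight_eq_esymm hΔ hsΔ hs]
    refine Multiset.esymm_div_choose_pow_le_pow (fun a ha => ?_) (by simpa using hr s hsΔ) hpk
    obtain ⟨v, -, rfl⟩ := Multiset.mem_map.mp ha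
    exact hx v
  · calc (faceWeight Δ x k / r.choose k) ^ p = (faceWeight Δ y k / r.choose k) ^ p := by rw [hk]
      _ ≤ (faceWeight Δ y p / r.choose p) ^ k := ih _ (erase_ssubset hw) hy hys
      _ ≤ (faceWeight Δ x p / r.choose p) ^ k := by
        gcongr
        exact div_nonneg (faceWeight_nonneg hy p) (Nat.cast_nonneg _)

end FaceWeight

lemma mul_rpow_neg_mul_rpow_le {a b c d : ℝ} {p k : ℕ} (hk : k ≠ 0) (ha : 0 ≤ a) (hb : 0 ≤ b)
    (hc : 0 < c) (hd : 0 ≤ d) (h : (b / d) ^ p ≤ (a / c) ^ k) :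
    c * d ^ (-((p : ℝ) / k)) * b ^ ((p : ℝ) / k) ≤ a := by
  have hroot := Real.rpow_le_rpow (by positivity) h (by positivity : (0 : ℝ) ≤ (k : ℝ)⁻¹)
  rw [← Real.rpow_natCast_mul (by positivity), Real.pow_rpow_inv_natCast (by positivity) hk,
    ← div_eq_mul_inv, Real.div_rpow hb hd, le_div_iff₀ hc] at hroot
  rw [Real.rpow_neg hd]
  calc c * (d ^ ((p : ℝ) / k))⁻¹ * b ^ ((p : ℝ) / k)
      = b ^ ((p : ℝ) / k) / d ^ ((p : ℝ) / k) * c := by ring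
    _ ≤ a := hroot

theorem stmt5_general {V : Type*} [DecidableEq V] (Δ : Finset (Finset V))
    (hΔ : ∀ B ∈ Δ, ∀ A ⊆ B, A ∈ Δ)
    (hflag : IsFlag Δ)
    (r k p : ℕ) (hrk : k ≤ r) (hpk : p < k)
    (hdim : (∀ F ∈ Δ, F.card ≤ r) ∧ (∃ F ∈ Δ, F.card = r)) :
    (faceCount Δ p : ℝ) ≥
      (r.choose p : ℝ) * (r.choose k : ℝ) ^ (-((p : ℝ) / (k : ℝ))) *
        (faceCount Δ k : ℝ) ^ ((p : ℝ) / (k : ℝ)) := by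
  set s := Δ.biUnion id
  have hs : ∀ F ∈ Δ, F ⊆ s := fun F hF => subset_biUnion_of_mem id hF
  have key := faceWeight_div_choose_pow_le hΔ hflag hdim.1 hpk.le (x := (s : Set V).indicator 1)
    (Set.indicator_nonneg fun _ _ => zero_le_one) Set.support_indicator_subset
  rw [faceWeight_indicator_eq_faceCount hs, faceWeight_indicator_eq_faceCount hs] at key
  exact mul_rpow_neg_mul_rpow_le (by omega) (Nat.cast_nonneg _) (Nat.cast_nonneg _)
    (Nat.cast_pos.mpr (Nat.choose_pos (by omega))) (Nat.cast_nonneg _) key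

theorem stmt5 {V : Type*} [DecidableEq V] (Δ : Finset (Finset V))
    (hΔ : ∀ B ∈ Δ, ∀ A ⊆ B, A ∈ Δ)
    (hflag : IsFlag Δ)
    (r k p : ℕ) (hrk : k ≤ r) (hpk : p < k) (hp : 0 < p)
    (hdim : (∀ F ∈ Δ, F.card ≤ r) ∧ (∃ F ∈ Δ, F.card = r)) :
    (faceCount Δ p : ℝ) ≥
      (r.choose p : ℝ) * (r.choose k : ℝ) ^ (-((p : ℝ) / (k : ℝ))) *
        (faceCount Δ k : ℝ) ^ ((p : ℝ) / (k : ℝ)) :=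
  stmt5_general Δ hΔ hflag r k p hrk hpk hdim
end

section
/- Let Δ be a flag complex and let r ≥ k > p > 0 be integers. If f_{k-1}(Δ) < C(r+1,k), then f_{p-1}(Δ) ≥ C(r,p) · C(r,k)^{-p/k} · (f_{k-1}(Δ))^{p/k}, where C(a,b) denotes the binomial coefficient and the inequality is between real numbers. -/
open Finset Real

lemma mul_log_add_sub_le_mul_log_div {a b l : ℝ} (ha : 0 ≤ a) (hb : 0 ≤ b)
    (hab : b = 0 → a = 0) (hl : 0 < l) : a * log l + a - l * b ≤ a * log (a / b) := by
  rcases ha.eq_or_lt with rfl | ha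
  · simpa using mul_nonneg hl.le hb
  have hb : 0 < b := hb.lt_of_ne fun h => ha.ne' (hab h.symm)
  have key := one_sub_inv_le_log_of_pos (by positivity : 0 < a / (l * b))
  rw [log_div ha.ne' (by positivity), log_mul hl.ne' hb.ne', inv_div] at key
  rw [log_div ha.ne' hb.ne']
  have : a * (1 - l * b / a) = a - l * b := by field_simp
  nlinarith [mul_le_mul_of_nonneg_left key ha.le]

/-- The log-sum inequality. -/
theorem sum_mul_log_div_le {ι : Type*} (s : Finset ι) {a b : ι → ℝ} {B : ℝ}
    (ha : ∀ i ∈ s, 0 ≤ a i) (hb : ∀ i ∈ s, 0 ≤ b i) (hab : ∀ i ∈ s, b i = 0 → a i = 0)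
    (hB : ∑ i ∈ s, b i ≤ B) :
    (∑ i ∈ s, a i) * log ((∑ i ∈ s, a i) / B) ≤ ∑ i ∈ s, a i * log (a i / b i) := by
  rcases (sum_nonneg ha).eq_or_lt with hA | hA
  · have hzero : ∀ i ∈ s, a i = 0 := (sum_eq_zero_iff_of_nonneg ha).mp hA.symm
    rw [← hA, zero_mul, sum_eq_zero fun i hi => by rw [hzero i hi, zero_mul]]
  set A := ∑ i ∈ s, a i
  obtain ⟨i, hi, hai⟩ := (sum_pos_iff_of_nonneg ha).mp hA
  have hbi : 0 < b i := (hb i hi).lt_of_ne fun h => hai.ne' (hab i hi h.symm)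
  have hBpos : 0 < B := (sum_pos' hb ⟨i, hi, hbi⟩).trans_le hB
  have hAB : A / B * ∑ i ∈ s, b i ≤ A := by
    rw [div_mul_eq_mul_div, div_le_iff₀ hBpos]
    exact mul_le_mul_of_nonneg_left hB hA.le
  calc A * log (A / B) ≤ A * log (A / B) + A - A / B * ∑ i ∈ s, b i := by linarith
    _ = ∑ i ∈ s, (a i * log (A / B) + a i - A / B * b i) := by
      rw [sum_sub_distrib, sum_add_distrib, ← sum_mul, ← mul_sum]
    _ ≤ ∑ i ∈ s, a i * log (a i / b i) := sum_le_sum fun i hi =>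
      mul_log_add_sub_le_mul_log_div (ha i hi) (hb i hi) (hab i hi) (div_pos hA hBpos)

lemma mul_log_div_mul_eq {x y z : ℝ} (hy : x ≠ 0 → y ≠ 0) (hz : x ≠ 0 → z ≠ 0) :
    x * log (x / (y * z)) = x * log x - x * log y - x * log z := by
  rcases eq_or_ne x 0 with rfl | hx
  · simp
  rw [log_div hx (mul_ne_zero (hy hx) (hz hx)), log_mul (hy hx) (hz hx)]
  ring

lemma cast_choose_succ_right_eq {n i : ℕ} (h : i ≤ n) :
    (n.choose (i + 1) : ℝ) = n.choose i * (n - i) / (i + 1) := by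
  rw [eq_div_iff (by positivity), ← Nat.cast_sub h]
  exact_mod_cast Nat.choose_succ_right_eq n i

lemma log_choose_succ_right {n i : ℕ} (h : i < n) :
    log (n.choose (i + 1)) = log (n.choose i) + log (n - i) - log (i + 1) := by
  have h1 : (0 : ℝ) < n.choose i := by exact_mod_cast Nat.choose_pos h.le
  have h2 : (0 : ℝ) < n - i := by rw [sub_pos]; exact_mod_cast h
  rw [cast_choose_succ_right_eq h.le, log_div (by positivity) (by positivity),
    log_mul h1.ne' h2.ne']

lemma log_choose_div_second_difference {n m a : ℕ} (hm : a + 2 ≤ m) (hn : a + 2 ≤ n) :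
    2 * (log (n.choose (a + 1)) - log (m.choose (a + 1))) - (log (n.choose a) - log (m.choose a)) -
        (log (n.choose (a + 2)) - log (m.choose (a + 2))) =
      log (m - a - 1) + log (n - a) - log (m - a) - log (n - a - 1) := by
  have hn1 := log_choose_succ_right (n := n) (i := a + 1) (by omega)
  have hm1 := log_choose_succ_right (n := m) (i := a + 1) (by omega)
  push_cast at hn1 hm1
  rw [hn1, hm1, log_choose_succ_right (by omega : a < n), log_choose_succ_right (by omega : a < m)]
  simp only [← sub_sub]
  ring

lemma mul_log_div_one_sub_inv_mul_sq {t s x : ℝ} (ht : 1 < t) (hs : 1 < s) (hx : 0 ≤ x) :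
    t * (t - 1) * x * log (t * (t - 1) * x / ((1 - 1 / s) * (t * x) ^ 2)) =
      t * (t - 1) * (x * (log (t - 1) + log s - log t - log (s - 1)) - x * log x) := by
  rcases hx.eq_or_lt with rfl | hx
  · simp
  have : t * (t - 1) * x / ((1 - 1 / s) * (t * x) ^ 2) = (t - 1) * s / (t * (s - 1) * x) := by
    have : s - 1 ≠ 0 := by linarith
    field_simp
  have ht1 : 0 < t - 1 := by linarith
  have hs1 : 0 < s - 1 := by linarith
  rw [this, log_div (by positivity) (by positivity), log_mul ht1.ne' (by positivity),
    log_mul (by positivity) (by positivity), log_mul (by positivity) hs1.ne']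
  ring

theorem mul_le_chord_of_sub_le_sub {f : ℕ → ℝ} {n p : ℕ}
    (hf : ∀ j, j + 2 ≤ n → f (j + 1) - f j ≤ f (j + 2) - f (j + 1)) (hpn : p ≤ n) :
    n * f p ≤ (n - p) * f 0 + p * f n := by
  set D : ℕ → ℝ := fun j => f (j + 1) - f j
  have hD : ∀ i j, i ≤ j → j < n → D i ≤ D j := by
    intro i j hij hjn
    induction j, hij using Nat.le_induction with
    | base => exact le_rfl
    | succ j hij ih => exact (ih (by omega)).trans (hf j (by omega))
  have hlow : f p - f 0 = ∑ i ∈ range p, D i := (sum_range_sub f p).symm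
  have hhigh : f n - f p = ∑ j ∈ Ico p n, D j := (sum_Ico_sub f hpn).symm
  have hcross : ((n : ℝ) - p) * ∑ i ∈ range p, D i ≤ p * ∑ j ∈ Ico p n, D j := by
    have h := sum_le_sum fun i (hi : i ∈ range p) => sum_le_sum fun j (hj : j ∈ Ico p n) =>
      hD i j (by simp at hi hj; omega) (by simp at hj; omega)
    simp only [sum_const, card_range, Nat.card_Ico, nsmul_eq_mul, ← mul_sum] at h
    rw [Nat.cast_sub hpn] at h
    linarith
  rw [show f p = f 0 + ∑ i ∈ range p, D i by linarith,
    show f n = f 0 + ∑ i ∈ range p, D i + ∑ j ∈ Ico p n, D j by linarith]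
  linear_combination hcross

section MotzkinStraus

variable {ι : Type*} (G : SimpleGraph ι) [DecidableRel G.Adj]

/-- Twice the Lagrangian of the subgraph induced on `I`, evaluated at the weights `q`. -/
noncomputable def adjPairSum (I : Finset ι) (q : ι → ℝ) : ℝ :=
  ∑ x ∈ I, ∑ y ∈ I, if G.Adj x y then q x * q y else 0

variable {G}

lemma adjPairSum_congr {I : Finset ι} {q q' : ι → ℝ} (h : ∀ x ∈ I, q x = q' x) :
    adjPairSum G I q = adjPairSum G I q' :=
  sum_congr rfl fun x hx => sum_congr rfl fun y hy => by rw [h x hx, h y hy]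

lemma adjPairSum_eq_erase_add [DecidableEq ι] {I : Finset ι} {u : ι} (hu : u ∈ I) (q : ι → ℝ) :
    adjPairSum G I q = adjPairSum G (I.erase u) q +
      2 * q u * ∑ w ∈ I.erase u, if G.Adj u w then q w else 0 := by
  have hcol : ∑ x ∈ I.erase u, (if G.Adj x u then q x * q u else 0) =
      q u * ∑ w ∈ I.erase u, if G.Adj u w then q w else 0 := by
    rw [mul_sum]
    exact sum_congr rfl fun x _ => by simp only [G.adj_comm x u]; split_ifs <;> ring
  have hrow : ∑ y ∈ I.erase u, (if G.Adj u y then q u * q y else 0) =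
      q u * ∑ w ∈ I.erase u, if G.Adj u w then q w else 0 := by
    rw [mul_sum]
    exact sum_congr rfl fun y _ => by split_ifs <;> ring
  unfold adjPairSum
  rw [← add_sum_erase I _ hu, ← add_sum_erase I _ hu, if_neg (G.irrefl), zero_add]
  simp_rw [← add_sum_erase I _ hu]
  rw [sum_add_distrib, hrow, hcol]
  ring

lemma adjPairSum_le_sq_sum_sub [DecidableEq ι] {I : Finset ι} {q : ι → ℝ} (hq : ∀ x ∈ I, 0 ≤ q x) :
    adjPairSum G I q ≤ (∑ x ∈ I, q x) ^ 2 - ∑ x ∈ I, q x ^ 2 := by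
  have hpt : ∀ x ∈ I, ∀ y ∈ I, (if G.Adj x y then q x * q y else 0) ≤
      q x * q y - if x = y then q x * q y else 0 := by
    intro x hx y hy
    by_cases hxy : x = y
    · subst hxy; simp
    · simp only [if_neg hxy, sub_zero]
      split_ifs
      exacts [le_rfl, mul_nonneg (hq x hx) (hq y hy)]
  refine (sum_le_sum fun x hx => sum_le_sum fun y hy => hpt x hx y hy).trans_eq ?_
  simp only [sum_sub_distrib, sum_ite_eq, sq, sum_mul_sum]
  simp

lemma adjPairSum_le_of_card_le [DecidableEq ι] {I : Finset ι} {q : ι → ℝ} {s : ℕ}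
    (hq : ∀ x ∈ I, 0 ≤ q x) (hIs : #I ≤ s) :
    adjPairSum G I q ≤ (1 - 1 / s) * (∑ x ∈ I, q x) ^ 2 := by
  rcases I.eq_empty_or_nonempty with rfl | hne
  · simp [adjPairSum]
  have hI : (0 : ℝ) < #I := by exact_mod_cast hne.card_pos
  have hcs : (∑ x ∈ I, q x) ^ 2 / #I ≤ ∑ x ∈ I, q x ^ 2 := by
    rw [div_le_iff₀ hI, mul_comm]; exact sq_sum_le_card_mul_sum_sq
  have hfrac : 1 / (s : ℝ) ≤ 1 / #I := one_div_le_one_div_of_le hI (by exact_mod_cast hIs)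
  calc adjPairSum G I q ≤ (∑ x ∈ I, q x) ^ 2 - ∑ x ∈ I, q x ^ 2 := adjPairSum_le_sq_sum_sub hq
    _ ≤ (1 - 1 / #I) * (∑ x ∈ I, q x) ^ 2 := by rw [one_sub_mul, one_div_mul_eq_div]; linarith
    _ ≤ (1 - 1 / s) * (∑ x ∈ I, q x) ^ 2 := by gcongr

lemma adjPairSum_le_adjPairSum_erase_update [DecidableEq ι] {I : Finset ι} {q : ι → ℝ}
    (hq : ∀ x ∈ I, 0 ≤ q x) {u v : ι} (hu : u ∈ I) (hv : v ∈ I) (huv : u ≠ v) (hadj : ¬G.Adj u v)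
    (hle : ∑ w ∈ (I.erase u).erase v, (if G.Adj u w then q w else 0) ≤
      ∑ w ∈ (I.erase u).erase v, if G.Adj v w then q w else 0) :
    adjPairSum G I q ≤ adjPairSum G (I.erase u) (Function.update q v (q u + q v)) := by
  have hv' : v ∈ I.erase u := mem_erase.mpr ⟨huv.symm, hv⟩
  have hrest : ∀ w ∈ (I.erase u).erase v, Function.update q v (q u + q v) w = q w :=
    fun w hw => Function.update_of_ne (ne_of_mem_erase hw) _ _
  have hold : adjPairSum G I q = adjPairSum G ((I.erase u).erase v) q +
      2 * q v * (∑ w ∈ (I.erase u).erase v, if G.Adj v w then q w else 0) +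
      2 * q u * ∑ w ∈ (I.erase u).erase v, if G.Adj u w then q w else 0 := by
    rw [adjPairSum_eq_erase_add hu, adjPairSum_eq_erase_add hv', ← add_sum_erase _ _ hv',
      if_neg hadj, zero_add]
  have hnew : adjPairSum G (I.erase u) (Function.update q v (q u + q v)) =
      adjPairSum G ((I.erase u).erase v) q +
      2 * (q u + q v) * ∑ w ∈ (I.erase u).erase v, if G.Adj v w then q w else 0 := by
    rw [adjPairSum_eq_erase_add hv', adjPairSum_congr hrest, Function.update_self]
    congr 2
    exact sum_congr rfl fun w hw => by rw [hrest w hw]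
  rw [hold, hnew]
  nlinarith [mul_le_mul_of_nonneg_left hle (hq u hu)]

/-- The Motzkin–Straus inequality. -/
theorem adjPairSum_le_of_forall_isClique [DecidableEq ι] {s : ℕ} (I : Finset ι)
    (hI : ∀ T ⊆ I, G.IsClique (T : Set ι) → #T ≤ s) {q : ι → ℝ} (hq : ∀ x ∈ I, 0 ≤ q x) :
    adjPairSum G I q ≤ (1 - 1 / s) * (∑ x ∈ I, q x) ^ 2 := by
  induction I using Finset.strongInduction generalizing q with
  | H I ih =>
  by_cases hclique : G.IsClique (I : Set ι)
  · exact adjPairSum_le_of_card_le hq (hI I subset_rfl hclique)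
  obtain ⟨u, hu, v, hv, huv, hadj⟩ : ∃ u ∈ I, ∃ v ∈ I, u ≠ v ∧ ¬G.Adj u v := by
    simpa [SimpleGraph.IsClique, Set.Pairwise] using hclique
  -- Shift the weight of `u` onto its non-neighbour `v`, for `u` the one of lighter neighbourhood.
  wlog hle : ∑ w ∈ (I.erase u).erase v, (if G.Adj u w then q w else 0) ≤
      ∑ w ∈ (I.erase u).erase v, if G.Adj v w then q w else 0 generalizing u v
  · rw [erase_right_comm] at hle
    exact this v hv u hu huv.symm (fun h => hadj h.symm) (le_of_not_ge hle)
  set q' := Function.update q v (q u + q v)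
  have hq' : ∀ x ∈ I.erase u, 0 ≤ q' x := by
    intro x hx
    by_cases hxv : x = v
    · simp [q', hxv, add_nonneg (hq u hu) (hq v hv)]
    · simp [q', hxv, hq x (mem_of_mem_erase hx)]
  have hsum : ∑ x ∈ I.erase u, q' x = ∑ x ∈ I, q x := by
    have hv' : v ∈ I.erase u := mem_erase.mpr ⟨huv.symm, hv⟩
    rw [← add_sum_erase _ _ hv', ← add_sum_erase _ _ hu, ← add_sum_erase _ _ hv',
      sum_congr rfl fun w hw => Function.update_of_ne (ne_of_mem_erase hw) _ _]
    simp [q']; ring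
  calc adjPairSum G I q ≤ adjPairSum G (I.erase u) q' :=
        adjPairSum_le_adjPairSum_erase_update hq hu hv huv hadj hle
    _ ≤ (1 - 1 / s) * (∑ x ∈ I.erase u, q' x) ^ 2 :=
        ih _ (erase_ssubset hu) (fun T hT => hI T (hT.trans (erase_subset u I))) hq'
    _ = (1 - 1 / s) * (∑ x ∈ I, q x) ^ 2 := by rw [hsum]

end MotzkinStraus

section PowersetSums

variable {V : Type*} [DecidableEq V] {M : Type*} [AddCommMonoid M]

lemma sum_sdiff_erase_eq_sum_sdiff_insert {A B : Finset V} (hAB : A ⊆ B) (h2 : #(B \ A) = 2)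
    (g : Finset V → M) : ∑ w ∈ B \ A, g (B.erase w) = ∑ w ∈ B \ A, g (insert w A) := by
  obtain ⟨u, v, huv, hBA⟩ := card_eq_two.mp h2
  have hu : u ∉ A := (mem_sdiff.mp (hBA ▸ mem_insert_self u {v})).2
  have hv : v ∉ A := (mem_sdiff.mp (hBA ▸ mem_insert_of_mem (mem_singleton_self v))).2
  have hB : B = insert u (insert v A) := by
    rw [← union_sdiff_of_subset hAB, hBA, union_comm, insert_union, singleton_union]
  have hBu : B.erase u = insert v A := by
    rw [hB, erase_insert (by simp [huv, hu])]
  have hBv : B.erase v = insert u A := by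
    rw [hB, insert_comm, erase_insert (by simp [huv.symm, hv])]
  rw [hBA, sum_pair huv, sum_pair huv, hBu, hBv, add_comm]

lemma sum_powersetCard_sum_sdiff_insert (B : Finset V) (a : ℕ) (g : Finset V → M) :
    ∑ A ∈ B.powersetCard a, ∑ w ∈ B \ A, g (insert w A) =
      (a + 1) • ∑ C ∈ B.powersetCard (a + 1), g C := by
  calc ∑ A ∈ B.powersetCard a, ∑ w ∈ B \ A, g (insert w A)
      = ∑ C ∈ B.powersetCard (a + 1), ∑ _w ∈ C, g C := by
        rw [sum_sigma', sum_sigma']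
        refine sum_nbij' (fun x => ⟨insert x.2 x.1, x.2⟩) (fun x => ⟨x.1.erase x.2, x.2⟩)
          ?_ ?_ ?_ ?_ fun _ _ => rfl
        · rintro ⟨A, w⟩ hx
          simp only [mem_sigma, mem_powersetCard, mem_sdiff] at hx ⊢
          exact ⟨⟨insert_subset hx.2.1 hx.1.1, by rw [card_insert_of_notMem hx.2.2, hx.1.2]⟩,
            mem_insert_self w A⟩
        · rintro ⟨C, w⟩ hx
          simp only [mem_sigma, mem_powersetCard, mem_sdiff] at hx ⊢
          exact ⟨⟨(erase_subset w C).trans hx.1.1, by rw [card_erase_of_mem hx.2, hx.1.2]; rfl⟩,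
            hx.1.1 hx.2, notMem_erase w C⟩
        · rintro ⟨A, w⟩ hx
          simp only [mem_sigma, mem_sdiff] at hx
          simp [erase_insert hx.2.2]
        · rintro ⟨C, w⟩ hx
          simp only [mem_sigma] at hx
          simp [insert_erase hx.2]
    _ = (a + 1) • ∑ C ∈ B.powersetCard (a + 1), g C := by
        rw [smul_sum]
        exact sum_congr rfl fun C hC => by rw [sum_const, (mem_powersetCard.mp hC).2]

end PowersetSums

section FlagComplex

variable {V : Type*} [DecidableEq V] {Δ : Finset (Finset V)}

-- `Δ # k` is `Finset.slice`, the members of `Δ` with `k` elements.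
variable (Δ) in
def cofaceCount (k : ℕ) (A : Finset V) : ℕ := #{K ∈ Δ # k | A ⊆ K}

lemma cofaceCount_anti {k : ℕ} {A B : Finset V} (h : A ⊆ B) :
    cofaceCount Δ k B ≤ cofaceCount Δ k A :=
  card_le_card <| monotone_filter_right _ fun _ _ hBK => h.trans hBK

lemma cofaceCount_empty (k : ℕ) : cofaceCount Δ k ∅ = faceCount Δ k := by
  simp [cofaceCount, faceCount, slice]

lemma cofaceCount_eq_one {k : ℕ} {K : Finset V} (hK : K ∈ Δ # k) : cofaceCount Δ k K = 1 := by
  rw [cofaceCount, card_eq_one]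
  refine ⟨K, eq_singleton_iff_unique_mem.mpr ⟨mem_filter.mpr ⟨hK, subset_rfl⟩, ?_⟩⟩
  intro K' hK'
  obtain ⟨hK', hKK'⟩ := mem_filter.mp hK'
  exact (eq_of_subset_of_card_le hKK' ((mem_slice.mp hK').2.trans (mem_slice.mp hK).2.symm).le).symm

lemma sum_slice_sum_superset_comm (hΔ : ∀ B ∈ Δ, ∀ A ⊆ B, A ∈ Δ) {M : Type*} [AddCommMonoid M]
    (i j : ℕ) (f : Finset V → Finset V → M) :
    ∑ A ∈ Δ # i, ∑ B ∈ Δ # j with A ⊆ B, f A B = ∑ B ∈ Δ # j, ∑ A ∈ B.powersetCard i, f A B :=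
  sum_comm' fun A B => by
    simp only [mem_slice, mem_filter, mem_powersetCard]
    exact ⟨fun ⟨⟨_, hA⟩, hB, hAB⟩ => ⟨⟨hAB, hA⟩, hB⟩,
      fun ⟨⟨hAB, hA⟩, hB⟩ => ⟨⟨hΔ B hB.1 A hAB, hA⟩, hB, hAB⟩⟩

lemma sum_cofaceCount_superset (hΔ : ∀ B ∈ Δ, ∀ A ⊆ B, A ∈ Δ) {k j : ℕ} {C : Finset V}
    (hC : #C ≤ j) :
    ∑ B ∈ Δ # j with C ⊆ B, cofaceCount Δ k B = (k - #C).choose (j - #C) * cofaceCount Δ k C := by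
  calc ∑ B ∈ Δ # j with C ⊆ B, cofaceCount Δ k B
      = ∑ B ∈ Δ # j with C ⊆ B, ∑ K ∈ Δ # k with B ⊆ K, 1 := by simp [cofaceCount]
    _ = ∑ K ∈ Δ # k with C ⊆ K, ∑ B ∈ K.powersetCard j with C ⊆ B, 1 := sum_comm' fun B K => by
        simp only [mem_slice, mem_filter, mem_powersetCard]
        exact ⟨fun ⟨⟨⟨_, hB⟩, hCB⟩, hK, hBK⟩ => ⟨⟨⟨hBK, hB⟩, hCB⟩, hK, hCB.trans hBK⟩,
          fun ⟨⟨⟨hBK, hB⟩, hCB⟩, hK, _⟩ => ⟨⟨⟨hΔ K hK.1 B hBK, hB⟩, hCB⟩, hK, hBK⟩⟩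
    _ = ∑ K ∈ Δ # k with C ⊆ K, (k - #C).choose (j - #C) := sum_congr rfl fun K hK => by
        obtain ⟨hK, hCK⟩ := mem_filter.mp hK
        rw [← card_eq_sum_ones, card_filter_powersetCard_subset C K j hCK hC, (mem_slice.mp hK).2]
    _ = _ := by rw [sum_const, smul_eq_mul, mul_comm, cofaceCount]

lemma sum_cofaceCount_slice (hΔ : ∀ B ∈ Δ, ∀ A ⊆ B, A ∈ Δ) (k j : ℕ) :
    ∑ A ∈ Δ # j, cofaceCount Δ k A = k.choose j * faceCount Δ k := by
  simpa [cofaceCount_empty] using sum_cofaceCount_superset hΔ (k := k) (C := ∅) (Nat.zero_le j)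

lemma choose_card_le_faceCount (hΔ : ∀ B ∈ Δ, ∀ A ⊆ B, A ∈ Δ) {B : Finset V} (hB : B ∈ Δ)
    (k : ℕ) : (#B).choose k ≤ faceCount Δ k := by
  rw [← card_powersetCard]
  exact card_le_card fun A hA => by
    rw [mem_powersetCard] at hA
    exact mem_filter.mpr ⟨hΔ B hB A hA.1, hA.2⟩

lemma faceCount_pos_of_le_s6 (hΔ : ∀ B ∈ Δ, ∀ A ⊆ B, A ∈ Δ) {k p : ℕ} (hN : 0 < faceCount Δ k)
    (hpk : p ≤ k) : 0 < faceCount Δ p := by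
  obtain ⟨K, hK⟩ := card_pos.mp hN
  obtain ⟨hKΔ, hKk⟩ := mem_slice.mp hK
  exact (Nat.choose_pos (hKk ▸ hpk)).trans_le (choose_card_le_faceCount hΔ hKΔ p)

lemma card_le_of_faceCount_lt (hΔ : ∀ B ∈ Δ, ∀ A ⊆ B, A ∈ Δ) {r k : ℕ}
    (hbound : faceCount Δ k < (r + 1).choose k) {B : Finset V} (hB : B ∈ Δ) : #B ≤ r := by
  by_contra! h
  exact (Nat.choose_le_choose k h).not_gt (hbound.trans_le' (choose_card_le_faceCount hΔ hB k))

lemma IsFlag.mem_of_forall_exists (hflag : IsFlag Δ) (hΔ : ∀ B ∈ Δ, ∀ A ⊆ B, A ∈ Δ)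
    {U : Finset V} (hU : ∀ x ∈ U, ∀ y ∈ U, ∃ D ∈ Δ, x ∈ D ∧ y ∈ D) : U ∈ Δ :=
  hflag U
    (fun v hv => by
      obtain ⟨D, hD, hvD, -⟩ := hU v hv v hv
      exact hΔ D hD _ (singleton_subset_iff.mpr hvD))
    (fun x hx y hy _ => by
      obtain ⟨D, hD, hxD, hyD⟩ := hU x hx y hy
      exact hΔ D hD _ (insert_subset hxD (singleton_subset_iff.mpr hyD)))

variable (Δ) in
def unionGraph : SimpleGraph (Finset V) where
  Adj C D := C ≠ D ∧ C ∪ D ∈ Δ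
  symm := ⟨fun C D h => ⟨h.1.symm, union_comm C D ▸ h.2⟩⟩
  loopless := ⟨fun _ h => h.1 rfl⟩

instance : DecidableRel (unionGraph Δ).Adj :=
  fun C D => inferInstanceAs (Decidable (C ≠ D ∧ C ∪ D ∈ Δ))

lemma card_le_of_isClique_unionGraph (hΔ : ∀ B ∈ Δ, ∀ A ⊆ B, A ∈ Δ) (hflag : IsFlag Δ) {r : ℕ}
    (hface : ∀ B ∈ Δ, #B ≤ r) {A : Finset V} {T : Finset (Finset V)}
    (hT : ∀ C ∈ T, C ∈ Δ ∧ A ⊆ C ∧ #C = #A + 1)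
    (hclique : (unionGraph Δ).IsClique (T : Set (Finset V))) : #T ≤ r - #A := by
  rcases T.eq_empty_or_nonempty with rfl | ⟨C₀, hC₀⟩
  · simp
  set U := T.sup id
  have hUΔ : U ∈ Δ := by
    refine hflag.mem_of_forall_exists hΔ fun x hx y hy => ?_
    obtain ⟨C, hC, hxC⟩ := mem_sup.mp hx
    obtain ⟨C', hC', hyC'⟩ := mem_sup.mp hy
    refine ⟨C ∪ C', ?_, mem_union_left _ hxC, mem_union_right _ hyC'⟩
    by_cases hCC' : C = C'
    · rw [hCC', union_self]; exact (hT C' hC').1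
    · exact (hclique hC hC' hCC').2
  have hAU : A ⊆ U := (hT C₀ hC₀).2.1.trans (le_sup (f := id) hC₀)
  have hinj : Set.InjOn (· \ A) (T : Set (Finset V)) := fun C hC C' hC' h => by
    rw [← union_sdiff_of_subset (hT C hC).2.1, ← union_sdiff_of_subset (hT C' hC').2.1]
    exact congrArg (A ∪ ·) h
  have himage : T.image (· \ A) ⊆ (U \ A).powersetCard 1 := by
    simp only [subset_iff, mem_image, mem_powersetCard, forall_exists_index, and_imp]
    rintro _ C hC rfl
    refine ⟨sdiff_subset_sdiff (le_sup (f := id) hC) subset_rfl, ?_⟩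
    rw [card_sdiff_of_subset (hT C hC).2.1, (hT C hC).2.2, Nat.add_sub_cancel_left]
  calc #T = #(T.image (· \ A)) := (card_image_of_injOn hinj).symm
    _ ≤ #(U \ A) := by simpa using card_le_card himage
    _ ≤ r - #A := by rw [card_sdiff_of_subset hAU]; exact Nat.sub_le_sub_right (hface U hUΔ) _

lemma sum_sum_mul_le_adjPairSum (hΔ : ∀ B ∈ Δ, ∀ A ⊆ B, A ∈ Δ) {a : ℕ} {A : Finset V}
    (hA : #A = a) {q : Finset V → ℝ} (hq : ∀ C, 0 ≤ q C) :
    ∑ B ∈ Δ # (a + 2) with A ⊆ B, ∑ w ∈ B \ A, q (insert w A) * q (B.erase w) ≤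
      adjPairSum (unionGraph Δ) {C ∈ Δ # (a + 1) | A ⊆ C} q := by
  set I := {C ∈ Δ # (a + 1) | A ⊆ C}
  set S := {B ∈ Δ # (a + 2) | A ⊆ B}.sigma (· \ A)
  have hmem : ∀ x ∈ S, x.1 ∈ Δ ∧ #x.1 = a + 2 ∧ A ⊆ x.1 ∧ x.2 ∈ x.1 ∧ x.2 ∉ A := by
    intro x hx
    simp only [S, mem_sigma, mem_filter, mem_slice, mem_sdiff] at hx
    exact ⟨hx.1.1.1, hx.1.1.2, hx.1.2, hx.2⟩
  set φ : (Σ _ : Finset V, V) → Finset V × Finset V := fun x => (insert x.2 A, x.1.erase x.2)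
  have hφ : Set.InjOn φ S := by
    intro x hx y hy hxy
    obtain ⟨-, -, -, hxB, hxA⟩ := hmem x hx
    obtain ⟨-, -, -, hyB, -⟩ := hmem y hy
    simp only [φ, Prod.mk.injEq] at hxy
    have hw : x.2 = y.2 := by
      have := hxy.1 ▸ mem_insert_self x.2 A
      exact (mem_insert.mp this).resolve_right hxA
    have hB : x.1 = y.1 := by rw [← insert_erase hxB, ← insert_erase hyB, hxy.2, hw]
    exact Sigma.ext hB (heq_of_eq hw)
  have hφS : S.image φ ⊆ (I ×ˢ I).filter fun P => (unionGraph Δ).Adj P.1 P.2 := by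
    simp only [subset_iff, mem_image, forall_exists_index, and_imp]
    rintro _ x hx rfl
    obtain ⟨hBΔ, hBcard, hAB, hwB, hwA⟩ := hmem x hx
    have hins : insert x.2 A ⊆ x.1 := insert_subset hwB hAB
    simp only [φ, mem_filter, mem_product, I, mem_slice]
    refine ⟨⟨⟨⟨hΔ _ hBΔ _ hins, by rw [card_insert_of_notMem hwA, hA]⟩, subset_insert _ _⟩,
      ⟨⟨hΔ _ hBΔ _ (erase_subset _ _), by rw [card_erase_of_mem hwB, hBcard]; rfl⟩,
        subset_erase.mpr ⟨hAB, hwA⟩⟩⟩, fun h => ?_, ?_⟩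
    · exact notMem_erase x.2 x.1 (h ▸ mem_insert_self x.2 A)
    · rwa [insert_union, union_eq_right.mpr (subset_erase.mpr ⟨hAB, hwA⟩), insert_erase hwB]
  calc ∑ B ∈ Δ # (a + 2) with A ⊆ B, ∑ w ∈ B \ A, q (insert w A) * q (B.erase w)
      = ∑ P ∈ S.image φ, q P.1 * q P.2 := by rw [sum_sigma', sum_image hφ]
    _ ≤ ∑ P ∈ (I ×ˢ I).filter fun P => (unionGraph Δ).Adj P.1 P.2, q P.1 * q P.2 :=
      sum_le_sum_of_subset_of_nonneg hφS fun P _ _ => mul_nonneg (hq _) (hq _)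
    _ = adjPairSum (unionGraph Δ) I q := by rw [adjPairSum, sum_filter, sum_product]

lemma sum_sum_cofaceCount_eq (hΔ : ∀ B ∈ Δ, ∀ A ⊆ B, A ∈ Δ) {k a : ℕ} (hak : a ≤ k)
    {A : Finset V} (hA : #A = a) :
    ∑ B ∈ Δ # (a + 2) with A ⊆ B, ∑ _w ∈ B \ A, (cofaceCount Δ k B : ℝ) =
      (k - a) * (k - a - 1) * cofaceCount Δ k A := by
  have hcard : ∀ B ∈ {B ∈ Δ # (a + 2) | A ⊆ B}, #(B \ A) = 2 := fun B hB => by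
    obtain ⟨hB, hAB⟩ := mem_filter.mp hB
    rw [card_sdiff_of_subset hAB, (mem_slice.mp hB).2, hA, Nat.add_sub_cancel_left]
  rw [sum_congr rfl fun B hB => by rw [sum_const, hcard B hB], ← smul_sum, nsmul_eq_mul,
    ← Nat.cast_sum, sum_cofaceCount_superset hΔ (by omega), hA, Nat.add_sub_cancel_left]
  push_cast [Nat.cast_choose_two, Nat.cast_sub hak]
  ring

lemma sum_sum_cofaceCount_mul_le (hΔ : ∀ B ∈ Δ, ∀ A ⊆ B, A ∈ Δ) (hflag : IsFlag Δ)
    {r k a : ℕ} (hface : ∀ B ∈ Δ, #B ≤ r) (hak : a ≤ k) {A : Finset V} (hA : A ∈ Δ # a) :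
    ∑ B ∈ Δ # (a + 2) with A ⊆ B, ∑ w ∈ B \ A,
        (cofaceCount Δ k (insert w A) : ℝ) * cofaceCount Δ k (B.erase w) ≤
      (1 - 1 / (r - a)) * ((k - a) * cofaceCount Δ k A) ^ 2 := by
  obtain ⟨hAΔ, hAa⟩ := mem_slice.mp hA
  refine (sum_sum_mul_le_adjPairSum hΔ hAa fun C => Nat.cast_nonneg _).trans ?_
  have hI : ∑ C ∈ Δ # (a + 1) with A ⊆ C, (cofaceCount Δ k C : ℝ) =
      (k - a) * cofaceCount Δ k A := by
    rw [← Nat.cast_sum, sum_cofaceCount_superset hΔ (by omega), hAa, Nat.add_sub_cancel_left,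
      Nat.choose_one_right]
    push_cast [Nat.cast_sub hak]
    ring
  rw [← hI, ← Nat.cast_sub (hAa ▸ hface A hAΔ)]
  refine adjPairSum_le_of_forall_isClique _ (fun T hT hclique => ?_) fun C _ => Nat.cast_nonneg _
  refine hAa ▸ card_le_of_isClique_unionGraph hΔ hflag hface (fun C hC => ?_) hclique
  obtain ⟨hC, hAC⟩ := mem_filter.mp (hT hC)
  exact ⟨(mem_slice.mp hC).1, hAC, by rw [(mem_slice.mp hC).2, hAa]⟩

lemma cofaceCount_mul_log_div_le (hΔ : ∀ B ∈ Δ, ∀ A ⊆ B, A ∈ Δ) (hflag : IsFlag Δ) {r k a : ℕ}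
    (hface : ∀ B ∈ Δ, #B ≤ r) (hak : a ≤ k) {A : Finset V} (hA : A ∈ Δ # a) :
    ((k - a) * (k - a - 1) * cofaceCount Δ k A : ℝ) *
        log ((k - a) * (k - a - 1) * cofaceCount Δ k A /
          ((1 - 1 / (r - a)) * ((k - a) * cofaceCount Δ k A) ^ 2)) ≤
      ∑ B ∈ Δ # (a + 2) with A ⊆ B, ∑ w ∈ B \ A, (cofaceCount Δ k B : ℝ) *
        log (cofaceCount Δ k B / (cofaceCount Δ k (insert w A) * cofaceCount Δ k (B.erase w))) := by
  have hsa := sum_sum_cofaceCount_eq hΔ hak (mem_slice.mp hA).2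
  have hsb := sum_sum_cofaceCount_mul_le hΔ hflag hface hak hA
  set S := {B ∈ Δ # (a + 2) | A ⊆ B}.sigma (· \ A)
  have hab : ∀ x ∈ S, (cofaceCount Δ k (insert x.2 A) : ℝ) * cofaceCount Δ k (x.1.erase x.2) = 0 →
      (cofaceCount Δ k x.1 : ℝ) = 0 := by
    intro x hx h
    simp only [S, mem_sigma, mem_filter, mem_sdiff] at hx
    have h1 := cofaceCount_anti (Δ := Δ) (k := k) (insert_subset hx.2.1 hx.1.2)
    have h2 := cofaceCount_anti (Δ := Δ) (k := k) (erase_subset x.2 x.1)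
    rcases mul_eq_zero.mp h with h | h <;> simp only [Nat.cast_eq_zero] at h ⊢ <;> omega
  rw [sum_sigma'] at hsa hsb ⊢
  rw [← hsa]
  exact sum_mul_log_div_le S (fun _ _ => Nat.cast_nonneg _)
    (fun _ _ => mul_nonneg (Nat.cast_nonneg _) (Nat.cast_nonneg _)) hab hsb

lemma sum_cofaceCount_mul_log_div_eq {k : ℕ} {A B : Finset V} (hAB : A ⊆ B)
    (h2 : #(B \ A) = 2) :
    ∑ w ∈ B \ A, (cofaceCount Δ k B : ℝ) *
        log (cofaceCount Δ k B / (cofaceCount Δ k (insert w A) * cofaceCount Δ k (B.erase w))) =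
      ∑ w ∈ B \ A, ((cofaceCount Δ k B : ℝ) * log (cofaceCount Δ k B) -
        2 * (cofaceCount Δ k B * log (cofaceCount Δ k (insert w A)))) := by
  have hpos : ∀ {C D : Finset V}, C ⊆ D →
      (cofaceCount Δ k D : ℝ) ≠ 0 → (cofaceCount Δ k C : ℝ) ≠ 0 := fun hCD hD => by
    have := cofaceCount_anti (Δ := Δ) (k := k) hCD
    simp only [ne_eq, Nat.cast_eq_zero] at hD ⊢
    omega
  rw [sum_congr rfl fun w hw => mul_log_div_mul_eq
    (hpos (insert_subset (mem_sdiff.mp hw).1 hAB)) (hpos (erase_subset w B)), sum_sub_distrib,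
    sum_sdiff_erase_eq_sum_sdiff_insert hAB h2 fun C => (cofaceCount Δ k B : ℝ) *
      log (cofaceCount Δ k C), ← sum_sub_distrib]
  exact sum_congr rfl fun w _ => by ring

lemma cofaceCount_mul_sub_mul_log_le (hΔ : ∀ B ∈ Δ, ∀ A ⊆ B, A ∈ Δ) (hflag : IsFlag Δ)
    {r k a : ℕ} (hface : ∀ B ∈ Δ, #B ≤ r) (hak : a + 2 ≤ k) (hkr : k ≤ r) {A : Finset V}
    (hA : A ∈ Δ # a) :
    (k - a) * (k - a - 1) * (cofaceCount Δ k A *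
        (log (k - a - 1) + log (r - a) - log (k - a) - log (r - a - 1)) -
        cofaceCount Δ k A * log (cofaceCount Δ k A)) ≤
      ∑ B ∈ Δ # (a + 2) with A ⊆ B, ∑ w ∈ B \ A, ((cofaceCount Δ k B : ℝ) *
        log (cofaceCount Δ k B) -
          2 * (cofaceCount Δ k B * log (cofaceCount Δ k (insert w A)))) := by
  have hcore := cofaceCount_mul_log_div_le hΔ hflag (r := r) hface (by omega : a ≤ k) hA
  rw [mul_log_div_one_sub_inv_mul_sq (by rw [lt_sub_iff_add_lt]; exact_mod_cast (by omega))
    (by rw [lt_sub_iff_add_lt]; exact_mod_cast (by omega)) (Nat.cast_nonneg _)] at hcore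
  refine hcore.trans_eq (sum_congr rfl fun B hB => ?_)
  obtain ⟨hB, hAB⟩ := mem_filter.mp hB
  refine sum_cofaceCount_mul_log_div_eq hAB ?_
  rw [card_sdiff_of_subset hAB, (mem_slice.mp hB).2, (mem_slice.mp hA).2, Nat.add_sub_cancel_left]

variable (Δ) in
noncomputable def cofaceMulLogSum (k i : ℕ) : ℝ :=
  ∑ A ∈ Δ # i, (cofaceCount Δ k A : ℝ) * log (cofaceCount Δ k A)

lemma sum_sum_sum_eq_cofaceMulLogSum (hΔ : ∀ B ∈ Δ, ∀ A ⊆ B, A ∈ Δ) {k a : ℕ} (hak : a + 1 ≤ k) :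
    ∑ A ∈ Δ # a, ∑ B ∈ Δ # (a + 2) with A ⊆ B, ∑ w ∈ B \ A, ((cofaceCount Δ k B : ℝ) *
      log (cofaceCount Δ k B) - 2 * (cofaceCount Δ k B * log (cofaceCount Δ k (insert w A)))) =
      (a + 2) * (a + 1) * cofaceMulLogSum Δ k (a + 2) -
        2 * (a + 1) * (k - a - 1) * cofaceMulLogSum Δ k (a + 1) := by
  set e : Finset V → ℝ := fun C => cofaceCount Δ k C
  have hdiag : ∑ B ∈ Δ # (a + 2), ∑ _C ∈ B.powersetCard (a + 1), e B * log (e B) =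
      (a + 2) * cofaceMulLogSum Δ k (a + 2) := by
    rw [cofaceMulLogSum, mul_sum]
    refine sum_congr rfl fun B hB => ?_
    rw [sum_const, card_powersetCard, (mem_slice.mp hB).2, Nat.choose_succ_self_right, nsmul_eq_mul]
    push_cast
    ring
  have hcross : ∑ B ∈ Δ # (a + 2), ∑ C ∈ B.powersetCard (a + 1), e B * log (e C) =
      (k - a - 1) * cofaceMulLogSum Δ k (a + 1) := by
    rw [← sum_slice_sum_superset_comm hΔ, cofaceMulLogSum, mul_sum]
    refine sum_congr rfl fun C hC => ?_
    rw [← sum_mul]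
    simp only [e, ← Nat.cast_sum]
    rw [sum_cofaceCount_superset hΔ (by rw [(mem_slice.mp hC).2]; omega), (mem_slice.mp hC).2,
      show a + 2 - (a + 1) = 1 by omega, Nat.choose_one_right, Nat.cast_mul,
      Nat.cast_sub (by omega : a + 1 ≤ k)]
    push_cast
    ring
  calc ∑ A ∈ Δ # a, ∑ B ∈ Δ # (a + 2) with A ⊆ B, ∑ w ∈ B \ A,
        (e B * log (e B) - 2 * (e B * log (e (insert w A))))
      = ∑ B ∈ Δ # (a + 2), ∑ A ∈ B.powersetCard a, ∑ w ∈ B \ A,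
        (e B * log (e B) - 2 * (e B * log (e (insert w A)))) :=
        sum_slice_sum_superset_comm hΔ a (a + 2) fun A B => ∑ w ∈ B \ A,
          (e B * log (e B) - 2 * (e B * log (e (insert w A))))
    _ = ∑ B ∈ Δ # (a + 2), (a + 1) • ∑ C ∈ B.powersetCard (a + 1),
        (e B * log (e B) - 2 * (e B * log (e C))) :=
        sum_congr rfl fun B _ => sum_powersetCard_sum_sdiff_insert B a fun C =>
          e B * log (e B) - 2 * (e B * log (e C))
    _ = (a + 1) * (∑ B ∈ Δ # (a + 2), ∑ _C ∈ B.powersetCard (a + 1), e B * log (e B) -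
        2 * ∑ B ∈ Δ # (a + 2), ∑ C ∈ B.powersetCard (a + 1), e B * log (e C)) := by
        simp only [nsmul_eq_mul, sum_sub_distrib, mul_sum, mul_sub]
        push_cast
        rfl
    _ = _ := by rw [hdiag, hcross]; ring

theorem mul_sub_cofaceMulLogSum_le (hΔ : ∀ B ∈ Δ, ∀ A ⊆ B, A ∈ Δ) (hflag : IsFlag Δ)
    {r k a : ℕ} (hface : ∀ B ∈ Δ, #B ≤ r) (hak : a + 2 ≤ k) (hkr : k ≤ r) :
    (k - a) * (k - a - 1) * (k.choose a * faceCount Δ k *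
        (log (k - a - 1) + log (r - a) - log (k - a) - log (r - a - 1)) -
        cofaceMulLogSum Δ k a) ≤
      (a + 2) * (a + 1) * cofaceMulLogSum Δ k (a + 2) -
        2 * (a + 1) * (k - a - 1) * cofaceMulLogSum Δ k (a + 1) := by
  calc (k - a) * (k - a - 1) * (k.choose a * faceCount Δ k *
        (log (k - a - 1) + log (r - a) - log (k - a) - log (r - a - 1)) -
        cofaceMulLogSum Δ k a)
      = ∑ A ∈ Δ # a, (k - a) * (k - a - 1) * (cofaceCount Δ k A *
        (log (k - a - 1) + log (r - a) - log (k - a) - log (r - a - 1)) -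
        cofaceCount Δ k A * log (cofaceCount Δ k A)) := by
        rw [← mul_sum, sum_sub_distrib, ← sum_mul, cofaceMulLogSum, ← Nat.cast_sum,
          sum_cofaceCount_slice hΔ, Nat.cast_mul]
    _ ≤ _ := sum_le_sum fun A hA => cofaceCount_mul_sub_mul_log_le hΔ hflag hface hak hkr hA
    _ = _ := sum_sum_sum_eq_cofaceMulLogSum hΔ (by omega)

variable (Δ) in
noncomputable def cofacePotential (r k i : ℕ) : ℝ :=
  cofaceMulLogSum Δ k i / k.choose i + faceCount Δ k * (log (r.choose i) - log (k.choose i))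

theorem cofacePotential_sub_le_sub (hΔ : ∀ B ∈ Δ, ∀ A ⊆ B, A ∈ Δ) (hflag : IsFlag Δ)
    {r k a : ℕ} (hface : ∀ B ∈ Δ, #B ≤ r) (hak : a + 2 ≤ k) (hkr : k ≤ r) :
    cofacePotential Δ r k (a + 1) - cofacePotential Δ r k a ≤
      cofacePotential Δ r k (a + 2) - cofacePotential Δ r k (a + 1) := by
  have hsd := mul_sub_cofaceMulLogSum_le hΔ hflag hface hak hkr
  set Φ := cofaceMulLogSum Δ k
  set N : ℝ := (faceCount Δ k : ℝ)
  set L := log (k - a - 1) + log (r - a) - log (k - a) - log (r - a - 1)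
  have hc0 : (0 : ℝ) < k.choose a := by exact_mod_cast Nat.choose_pos (by omega)
  have ht : (1 : ℝ) < k - a := by rw [lt_sub_iff_add_lt]; exact_mod_cast (by omega : 1 + a < k)
  have hc1 : (k.choose (a + 1) : ℝ) = k.choose a * (k - a) / (a + 1) :=
    cast_choose_succ_right_eq (by omega)
  have hc2 : (k.choose (a + 2) : ℝ) = k.choose (a + 1) * (k - a - 1) / (a + 2) := by
    rw [cast_choose_succ_right_eq (by omega : a + 1 ≤ k)]
    push_cast
    ring
  have hka : (k : ℝ) - a ≠ 0 := by linarith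
  have hka1 : (k : ℝ) - a - 1 ≠ 0 := by linarith
  have hkey : 0 ≤ Φ (a + 2) / k.choose (a + 2) - 2 * (Φ (a + 1) / k.choose (a + 1)) +
      Φ a / k.choose a - N * L := by
    have : Φ (a + 2) / k.choose (a + 2) - 2 * (Φ (a + 1) / k.choose (a + 1)) +
        Φ a / k.choose a - N * L =
        ((a + 2) * (a + 1) * Φ (a + 2) - 2 * (a + 1) * (k - a - 1) * Φ (a + 1) -
          (k - a) * (k - a - 1) * (k.choose a * N * L - Φ a)) /
        (k.choose a * (k - a) * (k - a - 1)) := by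
      rw [hc2, hc1]
      field_simp
      ring
    rw [this]
    exact div_nonneg (by linarith) (mul_nonneg (mul_nonneg hc0.le (by linarith)) (by linarith))
  rw [show L = _ from (log_choose_div_second_difference (n := r) hak (by omega)).symm] at hkey
  simp only [cofacePotential]
  linarith

lemma cofacePotential_zero (hempty : ∅ ∈ Δ) (r k : ℕ) :
    cofacePotential Δ r k 0 = faceCount Δ k * log (faceCount Δ k) := by
  have hslice : Δ # 0 = {∅} := by
    ext A
    simp only [mem_slice, card_eq_zero, mem_singleton]
    exact ⟨And.right, fun h => ⟨h ▸ hempty, h⟩⟩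
  simp [cofacePotential, cofaceMulLogSum, hslice, cofaceCount_empty]

lemma cofacePotential_self (r k : ℕ) :
    cofacePotential Δ r k k = faceCount Δ k * log (r.choose k) := by
  have hΦ : cofaceMulLogSum Δ k k = 0 :=
    sum_eq_zero fun K hK => by simp [cofaceCount_eq_one hK]
  simp [cofacePotential, hΦ]

lemma le_cofacePotential (hΔ : ∀ B ∈ Δ, ∀ A ⊆ B, A ∈ Δ) {r k p : ℕ} (hpk : p ≤ k)
    (hN : 0 < faceCount Δ k) :
    faceCount Δ k * (log (faceCount Δ k) + log (r.choose p) - log (faceCount Δ p)) ≤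
      cofacePotential Δ r k p := by
  have hc : (0 : ℝ) < k.choose p := by exact_mod_cast Nat.choose_pos hpk
  have hN' : (0 : ℝ) < faceCount Δ k := by exact_mod_cast hN
  have hfp : (0 : ℝ) < faceCount Δ p := by exact_mod_cast faceCount_pos_of_le_s6 hΔ hN hpk
  have hlogsum := sum_mul_log_div_le (Δ # p) (a := fun A => (cofaceCount Δ k A : ℝ))
    (b := fun _ => 1) (B := faceCount Δ p) (fun _ _ => Nat.cast_nonneg _) (fun _ _ => zero_le_one)
    (fun _ _ h => absurd h one_ne_zero) (by simp [faceCount, slice])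
  simp only [div_one, ← Nat.cast_sum, sum_cofaceCount_slice hΔ] at hlogsum
  have hΦ : k.choose p * faceCount Δ k * (log (k.choose p) + log (faceCount Δ k) -
      log (faceCount Δ p)) ≤ cofaceMulLogSum Δ k p := by
    refine le_of_eq_of_le ?_ hlogsum
    rw [Nat.cast_mul, log_div (by positivity) hfp.ne', log_mul hc.ne' hN'.ne']
  have : faceCount Δ k * (log (k.choose p) + log (faceCount Δ k) - log (faceCount Δ p)) ≤
      cofaceMulLogSum Δ k p / k.choose p := by
    rw [le_div_iff₀ hc]; linarith
  rw [cofacePotential]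
  linarith

theorem mul_log_faceCount_le (hΔ : ∀ B ∈ Δ, ∀ A ⊆ B, A ∈ Δ) (hflag : IsFlag Δ) {r k p : ℕ}
    (hface : ∀ B ∈ Δ, #B ≤ r) (hpk : p ≤ k) (hkr : k ≤ r) (hN : 0 < faceCount Δ k) :
    p * (log (faceCount Δ k) - log (r.choose k)) ≤
      k * (log (faceCount Δ p) - log (r.choose p)) := by
  have hchord := mul_le_chord_of_sub_le_sub (f := cofacePotential Δ r k)
    (fun j hj => cofacePotential_sub_le_sub hΔ hflag hface hj hkr) hpk
  rw [cofacePotential_zero (hflag ∅ (by simp) (by simp)), cofacePotential_self] at hchord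
  have hlow := mul_le_mul_of_nonneg_left (le_cofacePotential (r := r) hΔ hpk hN)
    (Nat.cast_nonneg k)
  have hN' : (0 : ℝ) < faceCount Δ k := by exact_mod_cast hN
  nlinarith

end FlagComplex

theorem stmt6 {V : Type*} [DecidableEq V] (Δ : Finset (Finset V))
    (hΔ : ∀ B ∈ Δ, ∀ A ⊆ B, A ∈ Δ)
    (hflag : IsFlag Δ)
    (r k p : ℕ) (hrk : k ≤ r) (hpk : p < k) (hp : 0 < p)
    (hbound : faceCount Δ k < (r + 1).choose k) :
    (faceCount Δ p : ℝ) ≥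
      (r.choose p : ℝ) * (r.choose k : ℝ) ^ (-((p : ℝ) / (k : ℝ))) *
        (faceCount Δ k : ℝ) ^ ((p : ℝ) / (k : ℝ)) := by
  have hk : (0 : ℝ) < k := by exact_mod_cast hp.trans hpk
  rcases (Nat.zero_le (faceCount Δ k)).eq_or_lt with hN | hN
  · rw [← hN, Nat.cast_zero, zero_rpow (by positivity), mul_zero]
    positivity
  have hlog := mul_log_faceCount_le hΔ hflag (fun B hB => card_le_of_faceCount_lt hΔ hbound hB)
    hpk.le hrk hN
  have hcp : (0 : ℝ) < r.choose p := by exact_mod_cast Nat.choose_pos (hpk.le.trans hrk)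
  have hck : (0 : ℝ) < r.choose k := by exact_mod_cast Nat.choose_pos hrk
  have hN' : (0 : ℝ) < faceCount Δ k := by exact_mod_cast hN
  have hfp : (0 : ℝ) < faceCount Δ p := by exact_mod_cast faceCount_pos_of_le_s6 hΔ hN hpk.le
  rw [ge_iff_le, ← log_le_log_iff (by positivity) hfp, log_mul (by positivity) (by positivity),
    log_mul hcp.ne' (by positivity), log_rpow hck, log_rpow hN']
  have : (p : ℝ) / k * (log (faceCount Δ k) - log (r.choose k)) ≤
      log (faceCount Δ p) - log (r.choose p) := by
    rw [div_mul_eq_mul_div, div_le_iff₀ hk]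
    linarith
  linarith
end

section
/- Let k > p > 0 be integers, let x > k-1 be a real number, and set c = (k-p)/2. Then (x·(x-1)⋯(x-k+1))^{1/k} < ((x-c)·(x-c-1)⋯(x-c-p+1))^{1/p}. -/
lemma rpow_helper' (a b : ℝ) (ha : 0 < a) (hb : 0 < b) (k p : ℕ) (hk : 0 < k) (hp : 0 < p)
    (h : a ^ p < b ^ k) : a ^ ((1:ℝ)/(k:ℝ)) < b ^ ((1:ℝ)/(p:ℝ)) := by
  have hk' : (0:ℝ) < k := by exact_mod_cast hk
  have hp' : (0:ℝ) < p := by exact_mod_cast hp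
  have e1 : a ^ ((1:ℝ)/(k:ℝ)) = (a ^ p) ^ ((1:ℝ)/((p:ℝ)*(k:ℝ))) := by
    rw [← Real.rpow_natCast a p, ← Real.rpow_mul ha.le]
    congr 1; field_simp
  have e2 : b ^ ((1:ℝ)/(p:ℝ)) = (b ^ k) ^ ((1:ℝ)/((p:ℝ)*(k:ℝ))) := by
    rw [← Real.rpow_natCast b k, ← Real.rpow_mul hb.le]
    congr 1; field_simp
  rw [e1, e2]
  exact Real.rpow_lt_rpow (by positivity) h (by positivity)

lemma prod_reflect' (n : ℕ) (c x : ℝ) :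
    (∏ i ∈ Finset.range n, (x - c - (i:ℝ))) = ∏ i ∈ Finset.range n, (x - c - ((n:ℝ)-1) + i) := by
  rw [← Finset.prod_range_reflect (fun j => x - c - ((n:ℝ)-1) + j) n]
  apply Finset.prod_congr rfl
  intro i hi
  simp only [Finset.mem_range] at hi
  have : ((n - 1 - i : ℕ) : ℝ) = (n:ℝ) - 1 - i := by
    have h1 : i ≤ n - 1 := by omega
    have h2 : 1 ≤ n := by omega
    push_cast [Nat.cast_sub h1, Nat.cast_sub h2]
    ring
  rw [this]; ring

lemma prod_split' (n : ℕ) (x : ℝ) :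
    (∏ i ∈ Finset.range (n+2), (x - (i:ℝ)))
      = x * (x - ((n:ℝ)+1)) * ∏ i ∈ Finset.range n, (x - 1 - (i:ℝ)) := by
  rw [Finset.prod_range_succ', Finset.prod_range_succ]
  have : ∀ i ∈ Finset.range n, (x - ((i+1 : ℕ):ℝ)) = x - 1 - (i:ℝ) := by
    intro i _; push_cast; ring
  rw [Finset.prod_congr rfl this]
  push_cast; ring

lemma sq_gt' (n : ℕ) (hn : 0 < n) (x : ℝ) (hx : (n:ℝ) + 1 < x) :
    (x * (x - ((n:ℝ)+1))) ^ n < (∏ i ∈ Finset.range n, (x - 1 - (i:ℝ))) ^ 2 := by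
  have key : (∏ i ∈ Finset.range n, (x - 1 - (i:ℝ))) ^ 2
      = ∏ i ∈ Finset.range n, ((x - 1 - (i:ℝ)) * (x - (n:ℝ) + i)) := by
    have hr := prod_reflect' n 1 x
    have : ∀ i ∈ Finset.range n, (x - 1 - ((n:ℝ)-1) + (i:ℝ)) = x - (n:ℝ) + i := by
      intro i _; ring
    rw [Finset.prod_congr rfl this] at hr
    rw [Finset.prod_mul_distrib, ← hr, sq]
  rw [key, show (x * (x - ((n:ℝ)+1))) ^ n = ∏ _i ∈ Finset.range n, (x * (x - ((n:ℝ)+1))) from by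
    rw [Finset.prod_const, Finset.card_range]]
  apply Finset.prod_lt_prod_of_nonempty
  · intro i _
    have : (0:ℝ) < n + 1 := by positivity
    nlinarith
  · intro i hi
    simp only [Finset.mem_range] at hi
    have h1 : (i:ℝ) + 1 ≤ (n:ℝ) := by exact_mod_cast hi
    have h0 : (0:ℝ) ≤ i := Nat.cast_nonneg i
    nlinarith [mul_pos (by linarith : (0:ℝ) < 1 + (i:ℝ)) (by linarith : (0:ℝ) < (n:ℝ) - (i:ℝ))]
  · exact Finset.nonempty_range_iff.mpr (by omega)

lemma step' (n : ℕ) (hn : 0 < n) (x : ℝ) (hx : (n:ℝ) + 1 < x) :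
    (∏ i ∈ Finset.range (n+2), (x - (i:ℝ))) ^ ((1:ℝ)/((n:ℝ)+2)) <
      (∏ i ∈ Finset.range n, (x - 1 - (i:ℝ))) ^ ((1:ℝ)/(n:ℝ)) := by
  set b := ∏ i ∈ Finset.range n, (x - 1 - (i:ℝ)) with hb
  have hbpos : 0 < b := Finset.prod_pos (by
    intro i hi
    simp only [Finset.mem_range] at hi
    have : (i:ℝ) + 1 ≤ (n:ℝ) := by exact_mod_cast hi
    linarith)
  have hxpos : (0:ℝ) < x := by
    have : (0:ℝ) ≤ n := Nat.cast_nonneg n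
    linarith
  have hfac : (0:ℝ) < x * (x - ((n:ℝ)+1)) := by
    have : (0:ℝ) < x - ((n:ℝ)+1) := by linarith
    positivity
  have hsplit := prod_split' n x
  have hapos : 0 < ∏ i ∈ Finset.range (n+2), (x - (i:ℝ)) := by
    rw [hsplit]; positivity
  have hcast : ((n:ℝ)+2) = ((n+2 : ℕ) : ℝ) := by push_cast; ring
  rw [hcast]
  apply rpow_helper' _ _ hapos hbpos (n+2) n (by omega) hn
  rw [hsplit, mul_pow]
  calc (x * (x - ((n:ℝ)+1))) ^ n * b ^ n < b ^ 2 * b ^ n := by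
        exact mul_lt_mul_of_pos_right (sq_gt' n hn x hx) (by positivity)
    _ = b ^ (n+2) := by ring

lemma base' (p : ℕ) (hp : 0 < p) (x : ℝ) (hx : (p:ℝ) < x) :
    (∏ i ∈ Finset.range (p+1), (x - (i:ℝ))) ^ p <
      (∏ i ∈ Finset.range p, (x - 1/2 - (i:ℝ))) ^ (p+1) := by
  set P := ∏ i ∈ Finset.range (p+1), (x - (i:ℝ)) with hP
  set Q := ∏ i ∈ Finset.range p, (x - 1/2 - (i:ℝ)) with hQ
  have hne : (Finset.range p).Nonempty := Finset.nonempty_range_iff.mpr (by omega)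
  have hple : ∀ i ∈ Finset.range p, (i:ℝ) ≤ (p:ℝ) - 1 := by
    intro i hi
    simp only [Finset.mem_range] at hi
    have : (i:ℝ) + 1 ≤ (p:ℝ) := by exact_mod_cast hi
    linarith
  have hxp : (0:ℝ) < x - p := by linarith
  have hx0 : (0:ℝ) < x := by
    have : (0:ℝ) ≤ p := Nat.cast_nonneg p
    linarith
  have hQpos : 0 < Q := Finset.prod_pos (by
    intro i hi; have := hple i hi; linarith)
  have hP1 : P = x * ∏ i ∈ Finset.range p, (x - 1 - (i:ℝ)) := by
    rw [hP, Finset.prod_range_succ']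
    have : ∀ i ∈ Finset.range p, (x - ((i+1:ℕ):ℝ)) = x - 1 - (i:ℝ) := by
      intro i _; push_cast; ring
    rw [Finset.prod_congr rfl this]
    push_cast; ring
  have hP2 : P = (∏ i ∈ Finset.range p, (x - (i:ℝ))) * (x - (p:ℝ)) := by
    rw [hP, Finset.prod_range_succ]
  have hPsq : P^2 = x * (x - (p:ℝ)) * ∏ i ∈ Finset.range p, ((x - (i:ℝ)) * (x - 1 - (i:ℝ))) := by
    rw [sq]
    nth_rewrite 1 [hP1]
    nth_rewrite 1 [hP2]
    rw [Finset.prod_mul_distrib]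
    ring
  have h1 : ∏ i ∈ Finset.range p, ((x - (i:ℝ)) * (x - 1 - (i:ℝ))) < Q^2 := by
    have : Q^2 = ∏ i ∈ Finset.range p, (x - 1/2 - (i:ℝ))^2 := by
      rw [hQ, sq, ← Finset.prod_mul_distrib]
      apply Finset.prod_congr rfl; intro i _; ring
    rw [this]
    apply Finset.prod_lt_prod_of_nonempty _ _ hne
    · intro i hi
      have := hple i hi
      have hxi : 0 < x - 1 - (i:ℝ) := by linarith
      have : 0 < x - (i:ℝ) := by linarith
      positivity
    · intro i _; nlinarith [sq_nonneg (x - 1/2 - (i:ℝ))]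
  have h2 : (x * (x - (p:ℝ)))^p < Q^2 := by
    have hQ2 : Q^2 = ∏ i ∈ Finset.range p, ((x - 1/2 - (i:ℝ)) * (x - 1/2 - ((p:ℝ)-1) + i)) := by
      rw [hQ, sq]
      nth_rewrite 2 [prod_reflect']
      rw [← Finset.prod_mul_distrib]
    rw [hQ2, show (x * (x - (p:ℝ))) ^ p = ∏ _i ∈ Finset.range p, (x * (x - (p:ℝ))) from by
      rw [Finset.prod_const, Finset.card_range]]
    apply Finset.prod_lt_prod_of_nonempty _ _ hne
    · intro i _; positivity
    · intro i hi
      have := hple i hi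
      have h0 : (0:ℝ) ≤ i := Nat.cast_nonneg i
      nlinarith [mul_pos (by linarith : (0:ℝ) < 1/2 + (i:ℝ)) (by linarith : (0:ℝ) < (p:ℝ) - 1/2 - i)]
  have key : P^(2*p) < Q^(2*(p+1)) := by
    calc P^(2*p) = (P^2)^p := by rw [pow_mul]
      _ < (x * (x - (p:ℝ)) * Q^2)^p := by
          apply pow_lt_pow_left₀ _ (sq_nonneg P) (by omega)
          rw [hPsq]
          exact mul_lt_mul_of_pos_left h1 (by positivity)
      _ = (x * (x - (p:ℝ)))^p * Q^(2*p) := by rw [mul_pow, pow_mul]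
      _ < Q^2 * Q^(2*p) := mul_lt_mul_of_pos_right h2 (by positivity)
      _ = Q^(2*(p+1)) := by ring
  have hsq : (P^p)^2 < (Q^(p+1))^2 := by
    rw [← pow_mul, ← pow_mul, mul_comm p 2, mul_comm (p+1) 2]
    exact key
  exact lt_of_pow_lt_pow_left₀ 2 (by positivity) hsq

theorem stmt7 (k p : ℕ) (hpk : p < k) (hp : 0 < p) (x : ℝ) (hx : (k : ℝ) - 1 < x) :
    (∏ i ∈ Finset.range k, (x - (i : ℝ))) ^ ((1 : ℝ) / (k : ℝ)) <
      (∏ i ∈ Finset.range p, (x - ((k : ℝ) - (p : ℝ)) / 2 - (i : ℝ))) ^ ((1 : ℝ) / (p : ℝ)) := by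
  revert hpk hx
  induction k using Nat.strong_induction_on generalizing x with
  | _ k ih =>
    intro hpk hx
    by_cases h1 : k = p + 1
    · subst h1
      have hx' : (p:ℝ) < x := by push_cast at hx; linarith
      have hc : ∀ i ∈ Finset.range p,
          x - (((p+1:ℕ):ℝ) - (p:ℝ))/2 - (i:ℝ) = x - 1/2 - (i:ℝ) := by
        intro i _; push_cast; ring
      rw [Finset.prod_congr rfl hc]
      have hPpos : 0 < ∏ i ∈ Finset.range (p+1), (x - (i:ℝ)) := by
        apply Finset.prod_pos
        intro i hi
        simp only [Finset.mem_range] at hi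
        have : (i:ℝ) ≤ (p:ℝ) := by exact_mod_cast Nat.lt_succ_iff.mp hi
        linarith
      have hQpos : 0 < ∏ i ∈ Finset.range p, (x - 1/2 - (i:ℝ)) := by
        apply Finset.prod_pos
        intro i hi
        simp only [Finset.mem_range] at hi
        have : (i:ℝ) + 1 ≤ (p:ℝ) := by exact_mod_cast hi
        linarith
      exact rpow_helper' _ _ hPpos hQpos (p+1) p (by omega) hp (base' p hp x hx')
    by_cases h2 : k = p + 2
    · subst h2
      have hx' : (p:ℝ) + 1 < x := by push_cast at hx; linarith
      have hc : ∀ i ∈ Finset.range p,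
          x - (((p+2:ℕ):ℝ) - (p:ℝ))/2 - (i:ℝ) = x - 1 - (i:ℝ) := by
        intro i _; push_cast; ring
      rw [Finset.prod_congr rfl hc,
        show ((p+2:ℕ):ℝ) = (p:ℝ)+2 from by push_cast; ring]
      exact step' p hp x hx'
    -- k ≥ p + 3
    have hk3 : p + 3 ≤ k := by omega
    have hk2 : ((k-2:ℕ):ℝ) = (k:ℝ) - 2 := by
      have h2k : (2:ℕ) ≤ k := by omega
      push_cast [Nat.cast_sub h2k]
      ring
    have hA := step' (k-2) (by omega) x (by rw [hk2]; linarith)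
    have hB := ih (k-2) (by omega) (x-1) (by omega) (by rw [hk2]; linarith)
    rw [show k - 2 + 2 = k from by omega] at hA
    rw [hk2] at hA hB
    rw [show ((k:ℝ)-2)+2 = (k:ℝ) from by ring] at hA
    have hc : ∀ i ∈ Finset.range p,
        x - 1 - (((k:ℝ)-2) - (p:ℝ))/2 - (i:ℝ) = x - ((k:ℝ) - (p:ℝ))/2 - (i:ℝ) := by
      intro i _; ring
    rw [Finset.prod_congr rfl hc] at hB
    exact lt_trans hA hB
end

section
/- Let p be a positive integer. For every real x > p-1, the function t ↦ (t·(t-1)⋯(t-p+1))^{1/p} is differentiable at x and its derivative at x is at least 1. -/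
/-!
Write `P(t) = ∏ (t - aᵢ)` over `n` factors. Logarithmic differentiation gives
`(P ^ (1/n))' = P ^ (1/n) · (1/n) ∑ 1/(t - aᵢ)`, and this is at least `1` because, by the HM-GM
inequality for the positive numbers `t - aᵢ`, the harmonic mean `n / ∑ 1/(t - aᵢ)` is at most the
geometric mean `P ^ (1/n)`.
-/

open Finset

variable {ι : Type*} (s : Finset ι) (a : ι → ℝ) {x : ℝ}

theorem hasDerivAt_prod_sub (hx : ∀ i ∈ s, x - a i ≠ 0) :
    HasDerivAt (fun t => ∏ i ∈ s, (t - a i))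
      ((∏ i ∈ s, (x - a i)) * ∑ i ∈ s, (x - a i)⁻¹) x := by
  classical
  refine (HasDerivAt.fun_finsetProd (u := s) fun i _ =>
    (hasDerivAt_id x).sub_const (a i)).congr_deriv ?_
  rw [mul_sum]
  refine sum_congr rfl fun i hi => ?_
  rw [smul_eq_mul, mul_one, ← mul_prod_erase s (fun j => x - a j) hi, mul_comm (x - a i),
    mul_assoc, mul_inv_cancel₀ (hx i hi), mul_one, id]

theorem hasDerivAt_prod_sub_rpow_inv_card (hx : ∀ i ∈ s, a i < x) :
    HasDerivAt (fun t => (∏ i ∈ s, (t - a i)) ^ (1 / (#s : ℝ)))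
      ((∏ i ∈ s, (x - a i)) ^ (1 / (#s : ℝ)) * ((∑ i ∈ s, (x - a i)⁻¹) / #s)) x := by
  have hP : 0 < ∏ i ∈ s, (x - a i) := prod_pos fun i hi => sub_pos.mpr (hx i hi)
  convert (hasDerivAt_prod_sub s a fun i hi => (sub_pos.mpr (hx i hi)).ne').rpow_const
    (p := 1 / (#s : ℝ)) (Or.inl hP.ne') using 1
  rw [Real.rpow_sub_one hP.ne']
  field_simp

theorem one_le_prod_sub_rpow_inv_card_mul_mean_inv (hs : s.Nonempty) (hx : ∀ i ∈ s, a i < x) :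
    1 ≤ (∏ i ∈ s, (x - a i)) ^ (1 / (#s : ℝ)) * ((∑ i ∈ s, (x - a i)⁻¹) / #s) := by
  have hpos : ∀ i ∈ s, 0 < x - a i := fun i hi => sub_pos.mpr (hx i hi)
  have hS : 0 < ∑ i ∈ s, (x - a i)⁻¹ := sum_pos (fun i hi => inv_pos.mpr (hpos i hi)) hs
  have hn : (0 : ℝ) < #s := by exact_mod_cast hs.card_pos
  have hm_le_gm : #s / ∑ i ∈ s, (x - a i)⁻¹ ≤ (∏ i ∈ s, (x - a i)) ^ (1 / (#s : ℝ)) := by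
    simpa using Real.harm_mean_le_geom_mean s hs (fun _ => 1) (fun i => x - a i)
      (fun _ _ => one_pos) (by simpa using hs.card_pos) hpos
  calc (1 : ℝ) = #s / (∑ i ∈ s, (x - a i)⁻¹) * ((∑ i ∈ s, (x - a i)⁻¹) / #s) := by
        rw [div_mul_div_comm, mul_comm, div_self (mul_pos hS hn).ne']
    _ ≤ _ := by gcongr

theorem stmt9 (p : ℕ) (hp : 0 < p) (x : ℝ) (hx : (p : ℝ) - 1 < x) :
    DifferentiableAt ℝ
        (fun t : ℝ => (∏ i ∈ Finset.range p, (t - (i : ℝ))) ^ ((1 : ℝ) / (p : ℝ))) x ∧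
      1 ≤ deriv (fun t : ℝ => (∏ i ∈ Finset.range p, (t - (i : ℝ))) ^ ((1 : ℝ) / (p : ℝ))) x := by
  have hlt : ∀ i ∈ range p, (i : ℝ) < x := fun i hi => by
    have : (i : ℝ) + 1 ≤ p := by exact_mod_cast mem_range.mp hi
    linarith
  have hD := hasDerivAt_prod_sub_rpow_inv_card (range p) Nat.cast hlt
  rw [card_range] at hD
  refine ⟨hD.differentiableAt, hD.deriv ▸ ?_⟩
  simpa using one_le_prod_sub_rpow_inv_card_mul_mean_inv (range p) Nat.cast
    (nonempty_range_iff.mpr hp.ne') hlt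
end

section
/- Given positive integers m and k, there is a unique way to pick an integer s ≥ 0 and integers n_k, n_{k-1}, …, n_{k-s} such that m = C(n_k,k) + C(n_{k-1},k-1) + … + C(n_{k-s},k-s) and n_k > n_{k-1} > … > n_{k-s} ≥ k-s > 0, where C(a,b) denotes the binomial coefficient. -/
/-!
The head `n_k` of a cascade for `m` is forced: it is the unique `n` with
`C(n, k) ≤ m < C(n + 1, k)`, because the tail of a cascade headed by `n` sums to less than
`C(n, k - 1) = C(n + 1, k) - C(n, k)`. Existence is the greedy algorithm, and both existence and
uniqueness follow by induction on `k`, the remainder `m - C(n, k)` being represented by a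
`(k - 1)`-cascade whose head is then automatically smaller than `n`.
-/

namespace Nat

lemma self_lt_add_choose (m : ℕ) {k : ℕ} (hk : 0 < k) : m < (m + k).choose k := by
  induction m with
  | zero => simp
  | succ m ih =>
    obtain ⟨k, rfl⟩ := Nat.exists_eq_add_one_of_ne_zero hk.ne'
    rw [show m + 1 + (k + 1) = m + (k + 1) + 1 by omega, choose_succ_succ']
    have : 0 < (m + (k + 1)).choose k := choose_pos (by omega)
    omega

lemma exists_choose_le_lt_choose_succ {m k : ℕ} (hm : 0 < m) (hk : 0 < k) :
    ∃ n, k ≤ n ∧ n.choose k ≤ m ∧ m < (n + 1).choose k := by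
  have hex : ∃ n, m < (n + 1).choose k := ⟨m + k - 1, by
    rw [Nat.sub_add_cancel (by omega)]; exact self_lt_add_choose m hk⟩
  refine ⟨Nat.find hex, ?_, ?_, Nat.find_spec hex⟩
  · by_contra! hlt
    have := (choose_le_choose k (show Nat.find hex + 1 ≤ k from hlt)).trans_eq (choose_self k)
    have : m < (Nat.find hex + 1).choose k := Nat.find_spec hex
    omega
  · rcases (Nat.find hex).eq_zero_or_pos with h | h
    · simp [h, choose_eq_zero_of_lt hk]
    · have := Nat.find_min hex (Nat.sub_lt h one_pos)
      rwa [Nat.sub_one_add_one h.ne', not_lt] at this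

lemma eq_of_choose_le_lt_choose_succ {m k n n' : ℕ} (h : n.choose k ≤ m)
    (h₁ : m < (n + 1).choose k) (h' : n'.choose k ≤ m) (h₁' : m < (n' + 1).choose k) :
    n = n' := by
  have le_of {a b : ℕ} (ha : a.choose k ≤ m) (hb : m < (b + 1).choose k) : a ≤ b := by
    by_contra! hba
    exact absurd (choose_le_choose k (show b + 1 ≤ a from hba)) (by omega)
  exact le_antisymm (le_of h h₁') (le_of h' h₁)

end Nat

def cascadeSum : ℕ → List ℕ → ℕ
  | _, [] => 0
  | k, n :: L => n.choose k + cascadeSum (k - 1) L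

inductive IsCascade : ℕ → List ℕ → Prop
  | singleton {k n : ℕ} : 0 < k → k ≤ n → IsCascade k [n]
  | cons {k n a : ℕ} {L : List ℕ} : a < n → IsCascade k (a :: L) → IsCascade (k + 1) (n :: a :: L)

lemma cascadeSum_eq_sum (k : ℕ) (L : List ℕ) :
    cascadeSum k L = ∑ i ∈ Finset.range L.length, (L.getD i 0).choose (k - i) := by
  induction L generalizing k with
  | nil => rfl
  | cons n L ih =>
    rw [cascadeSum, ih, List.length_cons, Finset.sum_range_succ', add_comm]
    simp only [List.getD_cons_succ, List.getD_cons_zero, Nat.sub_zero, Nat.sub_sub, add_comm 1]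

lemma cascadeSum_cons_succ (k n : ℕ) (L : List ℕ) :
    cascadeSum (k + 1) (n :: L) = n.choose (k + 1) + cascadeSum k L :=
  rfl

lemma choose_le_cascadeSum (k n : ℕ) (L : List ℕ) : n.choose k ≤ cascadeSum k (n :: L) :=
  Nat.le_add_right _ _

lemma isCascade_iff {k : ℕ} {L : List ℕ} :
    IsCascade k L ↔
      L ≠ [] ∧ L.IsChain (· > ·) ∧ L.length ≤ k ∧ k - (L.length - 1) ≤ L.getLastD 0 := by
  constructor
  · intro h
    induction h with
    | singleton hk hn => simp [hn]; omega
    | cons hlt _ ih =>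
      obtain ⟨-, hchain, hlen, hlast⟩ := ih
      simp only [List.length_cons, List.getLastD_cons] at hlen hlast ⊢
      exact ⟨List.cons_ne_nil _ _, List.isChain_cons_cons.2 ⟨hlt, hchain⟩, by omega, by omega⟩
  · rintro ⟨hne, hchain, hlen, hlast⟩
    obtain ⟨n, T, rfl⟩ := List.exists_cons_of_ne_nil hne
    induction T generalizing n k with
    | nil => exact .singleton (by simp at hlen; omega) (by simpa using hlast)
    | cons a T ih =>
      obtain ⟨hlt, hchain⟩ := List.isChain_cons_cons.1 hchain
      simp only [List.length_cons, List.getLastD_cons] at hlen hlast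
      obtain ⟨k, rfl⟩ : ∃ k', k = k' + 1 := ⟨k - 1, by omega⟩
      refine .cons hlt (ih a (List.cons_ne_nil _ _) hchain ?_ ?_)
      · simp only [List.length_cons]; omega
      · simp only [List.length_cons, List.getLastD_cons]; omega

namespace IsCascade

variable {k n : ℕ} {L : List ℕ}

lemma le_head (h : IsCascade k (n :: L)) : k ≤ n := by
  induction L generalizing k n with
  | nil => cases h with | singleton _ hn => exact hn
  | cons a L ih =>
    cases h with
    | cons hlt h => have := ih h; omega

lemma cascadeSum_pos (h : IsCascade k (n :: L)) : 0 < cascadeSum k (n :: L) :=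
  Nat.lt_add_right _ (Nat.choose_pos h.le_head)

lemma cascadeSum_lt_choose_succ (h : IsCascade k (n :: L)) :
    cascadeSum k (n :: L) < (n + 1).choose k := by
  induction L generalizing k n with
  | nil =>
    cases h with
    | singleton hk hn =>
      obtain ⟨k, rfl⟩ := Nat.exists_eq_add_one_of_ne_zero hk.ne'
      have : 0 < n.choose k := Nat.choose_pos (by omega)
      simp only [cascadeSum, Nat.choose_succ_succ']
      omega
  | cons a L ih =>
    cases h with
    | @cons k _ _ _ hlt h =>
      have htail := ih h
      have : (a + 1).choose k ≤ n.choose k := Nat.choose_le_choose k hlt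
      simp only [cascadeSum, Nat.add_sub_cancel, Nat.choose_succ_succ'] at htail ⊢
      omega

lemma head_eq (h : IsCascade k (n :: L)) {n' : ℕ} {L' : List ℕ} (h' : IsCascade k (n' :: L'))
    (hsum : cascadeSum k (n :: L) = cascadeSum k (n' :: L')) : n = n' :=
  Nat.eq_of_choose_le_lt_choose_succ (choose_le_cascadeSum ..) h.cascadeSum_lt_choose_succ
    ((choose_le_cascadeSum ..).trans_eq hsum.symm) (hsum.trans_lt h'.cascadeSum_lt_choose_succ)

lemma eq_of_cascadeSum_eq {L' : List ℕ} (h : IsCascade k L) (h' : IsCascade k L')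
    (hsum : cascadeSum k L = cascadeSum k L') : L = L' := by
  induction h generalizing L' with
  | singleton hk hn =>
    cases h' with
    | singleton => rw [head_eq (.singleton hk hn) (.singleton ‹_› ‹_›) hsum]
    | cons hlt h' =>
      obtain rfl := head_eq (.singleton hk hn) (.cons hlt h') hsum
      have := h'.cascadeSum_pos
      rw [cascadeSum_cons_succ, cascadeSum_cons_succ, cascadeSum.eq_1] at hsum
      omega
  | cons hlt h ih =>
    cases h' with
    | singleton hk hn =>
      obtain rfl := head_eq (.cons hlt h) (.singleton hk hn) hsum
      have := h.cascadeSum_pos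
      rw [cascadeSum_cons_succ, cascadeSum_cons_succ, cascadeSum.eq_1] at hsum
      omega
    | cons hlt' h' =>
      obtain rfl := head_eq (.cons hlt h) (.cons hlt' h') hsum
      rw [cascadeSum_cons_succ, cascadeSum_cons_succ, Nat.add_left_cancel_iff] at hsum
      rw [ih h' hsum]

end IsCascade

lemma exists_isCascade {m k : ℕ} (hm : 0 < m) (hk : 0 < k) :
    ∃ L, IsCascade k L ∧ cascadeSum k L = m := by
  induction k generalizing m with
  | zero => omega
  | succ k ih =>
    obtain ⟨n, hkn, hle, hlt⟩ := Nat.exists_choose_le_lt_choose_succ hm hk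
    rw [Nat.choose_succ_succ'] at hlt
    rcases (m - n.choose (k + 1)).eq_zero_or_pos with hr | hr
    · exact ⟨[n], .singleton hk hkn, by simp only [cascadeSum]; omega⟩
    have hk0 : 0 < k := Nat.pos_of_ne_zero fun h => by
      subst h; simp only [Nat.choose_zero_right] at hlt; omega
    obtain ⟨L, hL, hsum⟩ := ih hr hk0
    obtain ⟨a, T, rfl⟩ : ∃ a T, L = a :: T := by cases hL <;> exact ⟨_, _, rfl⟩
    have han : a < n := by
      by_contra! hna
      have := (Nat.choose_le_choose k hna).trans (choose_le_cascadeSum k a T)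
      omega
    exact ⟨n :: a :: T, .cons han hL, by rw [cascadeSum_cons_succ, hsum]; omega⟩

/-- The Kruskal-Katona cascade representation: there is a unique list
`L = [n_k, n_{k-1}, …, n_{k-s}]` (so `s = L.length - 1`) with
`m = Σ_i C(L[i], k-i)`, `n_k > n_{k-1} > … > n_{k-s}`, and `n_{k-s} ≥ k-s > 0`
(the latter being `L.length ≤ k` together with `k - (L.length - 1) ≤ L.getLastD 0`). -/
theorem stmt10 (m k : ℕ) (hm : 0 < m) (hk : 0 < k) :
    ∃! L : List ℕ,
      L ≠ [] ∧
      m = ∑ i ∈ Finset.range L.length, Nat.choose (L.getD i 0) (k - i) ∧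
      L.Chain' (· > ·) ∧
      L.length ≤ k ∧
      k - (L.length - 1) ≤ L.getLastD 0 := by
  have iff_isCascade (L : List ℕ) :
      (L ≠ [] ∧ m = ∑ i ∈ Finset.range L.length, Nat.choose (L.getD i 0) (k - i) ∧
        L.IsChain (· > ·) ∧ L.length ≤ k ∧ k - (L.length - 1) ≤ L.getLastD 0) ↔
      IsCascade k L ∧ cascadeSum k L = m := by
    rw [isCascade_iff, cascadeSum_eq_sum]
    exact ⟨fun ⟨hne, hsum, hc, hlen, hlast⟩ => ⟨⟨hne, hc, hlen, hlast⟩, hsum.symm⟩,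
      fun ⟨⟨hne, hc, hlen, hlast⟩, hsum⟩ => ⟨hne, hsum.symm, hc, hlen, hlast⟩⟩
  obtain ⟨L, hL, hsum⟩ := exists_isCascade hm hk
  refine ⟨L, (iff_isCascade L).2 ⟨hL, hsum⟩, fun L' hL' => ?_⟩
  obtain ⟨hL', hsum'⟩ := (iff_isCascade L').1 hL'
  exact hL'.eq_of_cascadeSum_eq hL (hsum'.trans hsum.symm)
end

section
/- Let r ≥ k > p ≥ 1 be integers and let g be a real-valued function on the natural numbers such that for all positive integers m and n, if T(nr,k;r) ≤ m ≤ T((n+1)r,k;r) then T(nr,p;r) ≤ g(m) ≤ T((n+1)r,p;r). Then g(m)/m^{p/k} converges, as m → ∞, to C(r,p)·C(r,k)^{-p/k}, where C(a,b) denotes the binomial coefficient. -/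
/-- `turanCliqueCount n k r` is the number of `k`-vertex cliques in the Turán graph `T_{n,r}`. -/
noncomputable def turanCliqueCount (n k r : ℕ) : ℕ :=
  ((SimpleGraph.turanGraph n r).cliqueSet k).ncard

/-!
The Turán graph `T_{nr,r}` is the complete equipartite graph on `Fin r × Fin n`, whose vertices
are adjacent iff their first coordinates differ. A `k`-clique is thus the graph of a function from a
`k`-set of parts to `Fin n`, so `T(nr,k;r) = C(r,k) n^k`.

For large `m` let `n` be the largest integer with `C(r,k) n^k ≤ m`. The hypothesis then pins `g m`
between `C(r,p) n^p` and `C(r,p) (n+1)^p`, so by squeezing `m / n^k → C(r,k)` and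
`g m / n^p → C(r,p)`, and `g m / m^(p/k) = (g m / n^p) / (m / n^k)^(p/k)`.
-/

open Finset Fintype

section PartialGraph

variable {α β : Type*}

def partialGraph (x : Σ u : Finset α, u → β) : Finset (α × β) :=
  x.1.attach.map ⟨fun a => (a.1, x.2 a), fun _ _ h => Subtype.ext (congrArg Prod.fst h)⟩

theorem mem_partialGraph {x : Σ u : Finset α, u → β} {a : α} {b : β} :
    (a, b) ∈ partialGraph x ↔ ∃ h : a ∈ x.1, x.2 ⟨a, h⟩ = b := by
  simp only [partialGraph, mem_map, mem_attach, true_and, Subtype.exists]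
  constructor
  · rintro ⟨a, h, he⟩
    cases he
    exact ⟨h, rfl⟩
  · rintro ⟨h, rfl⟩
    exact ⟨a, h, rfl⟩

theorem card_partialGraph (x : Σ u : Finset α, u → β) : #(partialGraph x) = #x.1 := by
  simp [partialGraph]

theorem injOn_fst_partialGraph (x : Σ u : Finset α, u → β) :
    Set.InjOn Prod.fst (partialGraph x : Set (α × β)) := by
  rintro ⟨a, b⟩ hab ⟨a', b'⟩ hab' (rfl : a = a')
  obtain ⟨h, rfl⟩ := mem_partialGraph.1 hab
  obtain ⟨h', rfl⟩ := mem_partialGraph.1 hab'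
  rfl

theorem image_fst_partialGraph [DecidableEq α] (x : Σ u : Finset α, u → β) :
    (partialGraph x).image Prod.fst = x.1 := by
  ext a
  refine ⟨fun ha => ?_, fun ha => mem_image.2 ⟨(a, x.2 ⟨a, ha⟩), mem_partialGraph.2 ⟨ha, rfl⟩,
    rfl⟩⟩
  obtain ⟨⟨a, b⟩, hab, rfl⟩ := mem_image.1 ha
  exact (mem_partialGraph.1 hab).1

theorem partialGraph_injective : Function.Injective (partialGraph (α := α) (β := β)) := by
  classical
  rintro ⟨u, φ⟩ ⟨v, ψ⟩ h
  obtain rfl : u = v := by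
    simpa only [image_fst_partialGraph] using congrArg (image Prod.fst) h
  obtain rfl : φ = ψ := funext fun a => by
    obtain ⟨_, h⟩ := mem_partialGraph.1 (h ▸ mem_partialGraph.2 ⟨a.2, rfl⟩ :
      (a.1, φ a) ∈ partialGraph ⟨u, ψ⟩)
    exact h.symm
  rfl

theorem exists_partialGraph_eq [DecidableEq α] {s : Finset (α × β)}
    (hs : Set.InjOn Prod.fst (s : Set (α × β))) :
    ∃ φ : s.image Prod.fst → β, partialGraph ⟨s.image Prod.fst, φ⟩ = s := by
  refine ⟨fun a => (mem_image.1 a.2).choose.2, ?_⟩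
  ext ⟨a, b⟩
  rw [mem_partialGraph]
  constructor
  · rintro ⟨h, rfl⟩
    obtain ⟨hc, hca⟩ := (mem_image.1 h).choose_spec
    convert hc using 1
    exact Prod.ext hca.symm rfl
  · intro hab
    refine ⟨mem_image_of_mem _ hab, ?_⟩
    obtain ⟨hc, hca⟩ := (mem_image.1 (mem_image_of_mem Prod.fst hab)).choose_spec
    exact congrArg Prod.snd (hs hc hab hca)

end PartialGraph

namespace SimpleGraph

variable {α β : Type*}

theorem Iso.ncard_cliqueSet {G : SimpleGraph α} {H : SimpleGraph β} (e : G ≃g H) (k : ℕ) :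
    (H.cliqueSet k).ncard = (G.cliqueSet k).ncard := by
  have hH : H = G.map e.toEquiv := by
    ext v w
    obtain ⟨v, rfl⟩ := e.surjective v
    obtain ⟨w, rfl⟩ := e.surjective w
    exact e.map_adj_iff.trans (map_adj_apply (f := e.toEquiv.toEmbedding)).symm
  rw [hH, cliqueSet_map_of_equiv, Set.ncard_image_of_injective _ (Finset.map_injective _)]

theorem isNClique_comap_fst_top_iff {k : ℕ} {s : Finset (α × β)} :
    ((⊤ : SimpleGraph α).comap Prod.fst).IsNClique k s ↔
      Set.InjOn Prod.fst (s : Set (α × β)) ∧ #s = k := by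
  rw [isNClique_iff]
  refine and_congr_left' ⟨fun h x hx y hy hxy => ?_, fun h x hx y hy hne hxy => hne (h hx hy hxy)⟩
  by_contra hne
  exact h hx hy hne hxy

theorem card_cliqueFinset_comap_fst_top [Fintype α] [Fintype β] [DecidableEq α] [DecidableEq β]
    (k : ℕ) : #(((⊤ : SimpleGraph α).comap (Prod.fst : α × β → α)).cliqueFinset k) =
      (card α).choose k * card β ^ k := by
  have card_sigma :
      #((powersetCard k (univ : Finset α)).sigma fun u => (univ : Finset (u → β))) =
        (card α).choose k * card β ^ k := by
    have card_fiber (u) (hu : u ∈ powersetCard k (univ : Finset α)) :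
        #(univ : Finset (u → β)) = card β ^ k := by
      rw [card_univ, card_fun, card_coe, (mem_powersetCard.1 hu).2]
    rw [Finset.card_sigma, sum_congr rfl card_fiber, sum_const, card_powersetCard, card_univ,
      smul_eq_mul]
  rw [← card_sigma]
  refine (card_bij (fun x _ => partialGraph x) (fun x hx => ?_)
    (fun x _ y _ hxy => partialGraph_injective hxy) (fun s hs => ?_)).symm
  · rw [mem_cliqueFinset_iff, isNClique_comap_fst_top_iff, card_partialGraph]
    exact ⟨injOn_fst_partialGraph x, (mem_powersetCard.1 (mem_sigma.1 hx).1).2⟩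
  · obtain ⟨hinj, hcard⟩ := isNClique_comap_fst_top_iff.1 (mem_cliqueFinset_iff.1 hs)
    obtain ⟨φ, hφ⟩ := exists_partialGraph_eq hinj
    refine ⟨⟨s.image Prod.fst, φ⟩, mem_sigma.2 ⟨mem_powersetCard.2 ⟨subset_univ _, ?_⟩,
      mem_univ _⟩, hφ⟩
    rw [card_image_of_injOn hinj, hcard]

end SimpleGraph

open SimpleGraph in
theorem turanCliqueCount_mul (n k r : ℕ) : turanCliqueCount (n * r) k r = r.choose k * n ^ k := by
  rw [turanCliqueCount, mul_comm n r, completeEquipartiteGraph.turanGraph.ncard_cliqueSet,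
    ← coe_cliqueFinset, Set.ncard_coe_finset, card_cliqueFinset_comap_fst_top, Fintype.card_fin,
    Fintype.card_fin]

open Filter Topology

section FloorIndex

variable {f : ℕ → ℕ} {m n : ℕ}

def floorIndex (f : ℕ → ℕ) (m : ℕ) : ℕ :=
  Nat.findGreatest (fun n => f n ≤ m) m

theorem apply_floorIndex_le (h : f 0 ≤ m) : f (floorIndex f m) ≤ m :=
  Nat.findGreatest_spec (P := fun n => f n ≤ m) (Nat.zero_le m) h

theorem le_floorIndex (hf : StrictMono f) (h : f n ≤ m) : n ≤ floorIndex f m :=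
  Nat.le_findGreatest ((hf.id_le n).trans h) h

theorem lt_apply_floorIndex_succ (hf : StrictMono f) : m < f (floorIndex f m + 1) := by
  by_contra! h
  exact (le_floorIndex hf h).not_gt (Nat.lt_succ_self _)

theorem tendsto_floorIndex (hf : StrictMono f) : Tendsto (floorIndex f) atTop atTop :=
  tendsto_atTop_atTop.2 fun n => ⟨f n, fun _ hm => le_floorIndex hf hm⟩

end FloorIndex

theorem tendsto_div_pow_of_le_of_le_succ_pow {ι : Type*} {l : Filter ι} {a : ι → ℕ}
    (ha : Tendsto a l atTop) {x : ι → ℝ} {c : ℝ} (j : ℕ)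
    (h : ∀ᶠ i in l, c * (a i : ℝ) ^ j ≤ x i ∧ x i ≤ c * ((a i : ℝ) + 1) ^ j) :
    Tendsto (fun i => x i / (a i : ℝ) ^ j) l (𝓝 c) := by
  have ha' : Tendsto (fun i => (a i : ℝ)) l atTop := tendsto_natCast_atTop_atTop.comp ha
  have hupper : Tendsto (fun i => c * (1 + (a i : ℝ)⁻¹) ^ j) l (𝓝 c) := by
    simpa using (((tendsto_inv_atTop_zero.comp ha').const_add 1).pow j).const_mul c
  refine tendsto_of_tendsto_of_tendsto_of_le_of_le' tendsto_const_nhds hupper ?_ ?_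
  · filter_upwards [h, ha'.eventually_gt_atTop 0] with i hi hpos
    rw [le_div_iff₀ (by positivity)]
    exact hi.1
  · filter_upwards [h, ha'.eventually_gt_atTop 0] with i hi hpos
    rw [div_le_iff₀ (by positivity), mul_assoc, ← mul_pow, add_mul, one_mul,
      inv_mul_cancel₀ hpos.ne']
    exact hi.2

theorem Real.pow_rpow_div_natCast {y : ℝ} (hy : 0 ≤ y) {k : ℕ} (hk : k ≠ 0) (p : ℕ) :
    (y ^ k) ^ ((p : ℝ) / k) = y ^ p := by
  rw [← Real.rpow_natCast_mul hy, mul_div_cancel₀ _ (Nat.cast_ne_zero.2 hk), Real.rpow_natCast]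

theorem tendsto_div_rpow_of_tendsto_div_pow {ι : Type*} {l : Filter ι} {a : ι → ℕ}
    (ha : Tendsto a l atTop) {x y : ι → ℝ} {c d : ℝ} (hc : 0 < c) (hx : ∀ᶠ i in l, 0 ≤ x i)
    {k : ℕ} (hk : k ≠ 0) (p : ℕ) (hxc : Tendsto (fun i => x i / (a i : ℝ) ^ k) l (𝓝 c))
    (hyd : Tendsto (fun i => y i / (a i : ℝ) ^ p) l (𝓝 d)) :
    Tendsto (fun i => y i / x i ^ ((p : ℝ) / k)) l (𝓝 (d * c ^ (-((p : ℝ) / k)))) := by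
  rw [Real.rpow_neg hc.le, ← div_eq_mul_inv]
  refine (hyd.div (hxc.rpow_const (Or.inr (by positivity))) (by positivity)).congr' ?_
  filter_upwards [hx, ha.eventually_gt_atTop 0] with i hxi hai
  rw [Pi.div_apply, Real.div_rpow hxi (by positivity), Real.pow_rpow_div_natCast (by positivity) hk,
    div_div_div_cancel_right₀ (by positivity)]

theorem stmt13_general (r k p : ℕ) (hrk : k ≤ r) (hpk : p < k)
    (g : ℕ → ℝ)
    (hg : ∀ m n : ℕ, 0 < m → 0 < n →
      turanCliqueCount (n * r) k r ≤ m → m ≤ turanCliqueCount ((n + 1) * r) k r →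
      (turanCliqueCount (n * r) p r : ℝ) ≤ g m ∧
        g m ≤ (turanCliqueCount ((n + 1) * r) p r : ℝ)) :
    Filter.Tendsto (fun m : ℕ => g m / (m : ℝ) ^ ((p : ℝ) / (k : ℝ))) Filter.atTop
      (nhds ((r.choose p : ℝ) * (r.choose k : ℝ) ^ (-((p : ℝ) / (k : ℝ))))) := by
  have hk : k ≠ 0 := by omega
  have hC : 0 < r.choose k := Nat.choose_pos hrk
  let f (n : ℕ) : ℕ := r.choose k * n ^ k
  have hf : StrictMono f := fun _ _ h => Nat.mul_lt_mul_of_pos_left (Nat.pow_lt_pow_left h hk) hC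
  let N := floorIndex f
  have bounds : ∀ᶠ m in atTop,
      ((r.choose k : ℝ) * (N m : ℝ) ^ k ≤ m ∧ (m : ℝ) ≤ r.choose k * ((N m : ℝ) + 1) ^ k) ∧
      ((r.choose p : ℝ) * (N m : ℝ) ^ p ≤ g m ∧ g m ≤ r.choose p * ((N m : ℝ) + 1) ^ p) := by
    filter_upwards [eventually_ge_atTop (f 1)] with m hm
    have hlow : f (N m) ≤ m := apply_floorIndex_le (by simp [f, hk])
    have hupp : m ≤ f (N m + 1) := (lt_apply_floorIndex_succ hf).le
    have hgm := hg m (N m) (hC.trans_le (by simpa [f] using hm)) (le_floorIndex hf hm)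
      (by rwa [turanCliqueCount_mul]) (by rwa [turanCliqueCount_mul])
    simp only [turanCliqueCount_mul, Nat.cast_mul, Nat.cast_pow, Nat.cast_add, Nat.cast_one] at hgm
    exact ⟨⟨by exact_mod_cast hlow, by exact_mod_cast hupp⟩, hgm⟩
  have hN := tendsto_floorIndex hf
  exact tendsto_div_rpow_of_tendsto_div_pow hN (by exact_mod_cast hC)
    (.of_forall fun m => Nat.cast_nonneg m) hk p
    (tendsto_div_pow_of_le_of_le_succ_pow hN k (bounds.mono fun _ h => h.1))
    (tendsto_div_pow_of_le_of_le_succ_pow hN p (bounds.mono fun _ h => h.2))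

theorem stmt13 (r k p : ℕ) (hrk : k ≤ r) (hpk : p < k) (hp : 1 ≤ p)
    (g : ℕ → ℝ)
    (hg : ∀ m n : ℕ, 0 < m → 0 < n →
      turanCliqueCount (n * r) k r ≤ m → m ≤ turanCliqueCount ((n + 1) * r) k r →
      (turanCliqueCount (n * r) p r : ℝ) ≤ g m ∧
        g m ≤ (turanCliqueCount ((n + 1) * r) p r : ℝ)) :
    Filter.Tendsto (fun m : ℕ => g m / (m : ℝ) ^ ((p : ℝ) / (k : ℝ))) Filter.atTop
      (nhds ((r.choose p : ℝ) * (r.choose k : ℝ) ^ (-((p : ℝ) / (k : ℝ))))) :=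
  stmt13_general r k p hrk hpk g hg
end

section
/- (Kruskal–Katona, inequality direction.) Let Δ be a simplicial complex, let k ≥ 2 be an integer, and let m = f_{k-1}(Δ) > 0. Write m = C(n_k,k) + C(n_{k-1},k-1) + … + C(n_{k-s},k-s) with s ≥ 0 and n_k > n_{k-1} > … > n_{k-s} ≥ k-s > 0. Then f_{k-2}(Δ) ≥ C(n_k,k-1) + C(n_{k-1},k-2) + … + C(n_{k-s},k-s-1), where C(a,b) denotes the binomial coefficient. -/
open Finset Finset.Colex
open scoped FinsetFamily

lemma Fin.ofNat_injOn_range (n : ℕ) [NeZero n] : Set.InjOn (Fin.ofNat n) (Finset.range n) :=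
  Set.LeftInvOn.injOn (f₁' := Fin.val) fun _ hx => by
    rw [Fin.val_ofNat, Nat.mod_eq_of_lt (Finset.mem_range.1 hx)]

namespace Finset

section Transport

variable {α β : Type*} [DecidableEq α] [DecidableEq β]

lemma image_erase_of_injOn {f : α → β} {s : Finset α} (hf : Set.InjOn f s) {a : α}
    (ha : a ∈ s) :
    (s.erase a).image f = (s.image f).erase (f a) := by
  grind [hf.eq_iff]

lemma card_shadow_image_le {f : α → β} {𝒜 : Finset (Finset α)}
    (hf : ∀ s ∈ 𝒜, Set.InjOn f s) :
    #(∂ (𝒜.image (image f))) ≤ #(∂ 𝒜) := by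
  refine (card_le_card fun t ht => ?_).trans (card_image_le (f := image f))
  obtain ⟨_, hs', _, hb, rfl⟩ := mem_shadow_iff.1 ht
  obtain ⟨s, hs, rfl⟩ := mem_image.1 hs'
  obtain ⟨a, ha, rfl⟩ := mem_image.1 hb
  rw [← image_erase_of_injOn (hf s hs) ha]
  exact mem_image_of_mem _ (erase_mem_shadow hs ha)

end Transport

lemma image_val_image_ofNat {n : ℕ} [NeZero n] {s : Finset ℕ} (hs : s ⊆ range n) :
    (s.image (Fin.ofNat n)).image Fin.val = s := by
  rw [image_image]
  refine (image_congr fun x hx => ?_).trans image_id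
  rw [Function.comp_apply, Fin.val_ofNat, Nat.mod_eq_of_lt (mem_range.1 (hs hx)), id]

lemma Colex.IsInitSeg.image_ofNat {𝒞 : Finset (Finset ℕ)} {r n : ℕ} [NeZero n]
    (h𝒞 : IsInitSeg 𝒞 r) (hn : ∀ s ∈ 𝒞, s ⊆ range n) :
    IsInitSeg (𝒞.image (image (Fin.ofNat n))) r := by
  refine ⟨?_, ?_⟩
  · intro _ h
    obtain ⟨s, hs, rfl⟩ := mem_image.1 h
    rw [card_image_of_injOn ((Fin.ofNat_injOn_range n).mono (hn s hs)), h𝒞.1 hs]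
  · rintro _ t h ⟨hts, ht⟩
    obtain ⟨s, hs, rfl⟩ := mem_image.1 h
    have hval : toColex (t.image Fin.val) < toColex s := by
      rwa [← image_val_image_ofNat (hn s hs), toColex_image_lt_toColex_image Fin.val_strictMono]
    refine mem_image.2 ⟨t.image Fin.val, h𝒞.2 hs ⟨hval, ?_⟩, ?_⟩
    · rwa [card_image_of_injective _ Fin.val_injective]
    · rw [image_image]
      exact (image_congr fun x _ => Fin.ofNat_val_eq_self x).trans image_id

theorem kruskal_katona_of_isInitSeg_nat {V : Type*} [DecidableEq V] {𝒜 : Finset (Finset V)}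
    {𝒞 : Finset (Finset ℕ)} {r : ℕ} (h𝒜 : (𝒜 : Set (Finset V)).Sized r) (h𝒞𝒜 : #𝒞 ≤ #𝒜)
    (h𝒞 : IsInitSeg 𝒞 r) : #(∂ 𝒞) ≤ #(∂ 𝒜) := by
  obtain ⟨f, hf⟩ := Set.countable_iff_exists_injOn.1 (𝒜.biUnion id : Set V).toFinite.countable
  obtain ⟨N, hN⟩ := exists_nat_subset_range ((𝒜.biUnion id).image f ∪ 𝒞.biUnion id)
  replace hN := hN.trans (range_subset_range.2 N.le_succ)
  set g : V → Fin (N + 1) := fun v => Fin.ofNat (N + 1) (f v)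
  have hg : Set.InjOn g (𝒜.biUnion id) := (Fin.ofNat_injOn_range (N + 1)).comp hf
    fun _ hv => hN (mem_union_left _ (mem_image_of_mem f hv))
  have hg𝒜 : ∀ s ∈ 𝒜, Set.InjOn g s :=
    fun s hs => hg.mono (coe_subset.2 (subset_biUnion_of_mem id hs))
  have h𝒞N : ∀ s ∈ 𝒞, s ⊆ range (N + 1) :=
    fun s hs => (subset_biUnion_of_mem id hs).trans (subset_union_right.trans hN)
  set 𝒜' := 𝒜.image (image g)
  set 𝒞' := 𝒞.image (image (Fin.ofNat (N + 1)))
  have h𝒜' : (𝒜' : Set (Finset (Fin (N + 1)))).Sized r := by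
    intro _ h
    obtain ⟨s, hs, rfl⟩ := mem_image.1 h
    rw [card_image_of_injOn (hg𝒜 s hs), h𝒜 hs]
  have hcard : #𝒞' ≤ #𝒜' := by
    rw [card_image_of_injOn (injOn_image_of_biUnion_injOn hg)]
    exact card_image_le.trans h𝒞𝒜
  have h𝒞' : 𝒞'.image (image Fin.val) = 𝒞 := by
    rw [image_image]
    exact (image_congr fun s hs => image_val_image_ofNat (h𝒞N s hs)).trans image_id
  calc #(∂ 𝒞) = #(∂ (𝒞'.image (image Fin.val))) := by rw [h𝒞']
    _ ≤ #(∂ 𝒞') := card_shadow_image_le fun _ _ => Fin.val_injective.injOn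
    _ ≤ #(∂ 𝒜') := kruskal_katona h𝒜' hcard (h𝒞.image_ofNat h𝒞N)
    _ ≤ #(∂ 𝒜) := card_shadow_image_le hg𝒜

end Finset

lemma List.getLastD_add_length_le_of_isChain_gt :
    ∀ {a : ℕ} {l : List ℕ}, List.IsChain (· > ·) (a :: l) → l.getLastD a + l.length ≤ a
  | _, [], _ => le_rfl
  | _, _ :: _, h => by
    obtain ⟨hab, hbl⟩ := List.isChain_cons_cons.1 h
    have := List.getLastD_add_length_le_of_isChain_gt hbl
    rw [List.getLastD_cons, List.length_cons]
    omega

/-- `cascade [n_k, …, n_{k-s}] k` is the colex initial segment of the `k`-subsets of `ℕ` with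
`C(n_k,k) + ⋯ + C(n_{k-s},k-s)` members: all `k`-subsets of `[0, n_k)`, then `n_k` inserted into
each set of `cascade [n_{k-1}, …] (k-1)`. -/
def cascade : List ℕ → ℕ → Finset (Finset ℕ)
  | [], _ => ∅
  | a :: l, j => powersetCard j (range a) ∪ (cascade l (j - 1)).image (insert a)

section Cascade

variable {a j : ℕ} {l L : List ℕ}

lemma subset_range_of_mem_cascade (hl : List.IsChain (· > ·) (a :: l)) {S : Finset ℕ}
    (hS : S ∈ cascade l j) : S ⊆ range a := by
  induction l generalizing a j S with
  | nil => simp [cascade] at hS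
  | cons b l ih =>
    obtain ⟨hab, hbl⟩ := List.isChain_cons_cons.1 hl
    have hba : range b ⊆ range a := range_subset_range.2 hab.le
    rw [cascade, mem_union] at hS
    rcases hS with hS | hS
    · exact (mem_powersetCard.1 hS).1.trans hba
    · obtain ⟨S', hS', rfl⟩ := mem_image.1 hS
      exact insert_subset (mem_range.2 hab) ((ih hbl hS').trans hba)

lemma notMem_of_mem_cascade (hl : List.IsChain (· > ·) (a :: l)) {S : Finset ℕ}
    (hS : S ∈ cascade l j) : a ∉ S :=
  fun ha => lt_irrefl a (mem_range.1 (subset_range_of_mem_cascade hl hS ha))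

lemma card_cascade (hL : L.IsChain (· > ·)) :
    #(cascade L j) = ∑ i ∈ range L.length, (L.getD i 0).choose (j - i) := by
  induction L generalizing j with
  | nil => simp [cascade]
  | cons a l ih =>
    have hdisj : Disjoint (powersetCard j (range a)) ((cascade l (j - 1)).image (insert a)) := by
      refine disjoint_left.2 fun S hS hS' => ?_
      obtain ⟨S', -, rfl⟩ := mem_image.1 hS'
      exact notMem_range_self ((mem_powersetCard.1 hS).1 (mem_insert_self a S'))
    have hinj : Set.InjOn (insert a) (cascade l (j - 1) : Set (Finset ℕ)) :=
      Set.LeftInvOn.injOn (f₁' := fun S => S.erase a)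
        fun _ hS => erase_insert (notMem_of_mem_cascade hL hS)
    rw [cascade, card_union_of_disjoint hdisj, card_powersetCard, card_range,
      card_image_of_injOn hinj, ih hL.tail, List.length_cons, sum_range_succ', add_comm]
    simp [Nat.sub_sub, add_comm]

lemma sized_cascade (hL : L.IsChain (· > ·)) (hlen : L.length ≤ j + 1) :
    (cascade L j : Set (Finset ℕ)).Sized j := by
  induction L generalizing j with
  | nil => simp [cascade]
  | cons a l ih =>
    intro S hS
    rw [mem_coe, cascade, mem_union] at hS
    rcases hS with hS | hS
    · exact (mem_powersetCard.1 hS).2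
    · obtain ⟨S', hS', rfl⟩ := mem_image.1 hS
      have hl : l ≠ [] := by rintro rfl; simp [cascade] at hS'
      have hj : 1 ≤ j := by
        have := List.length_pos_iff.2 hl
        simp only [List.length_cons] at hlen
        omega
      rw [card_insert_of_notMem (notMem_of_mem_cascade hL hS'),
        ih hL.tail (by simp only [List.length_cons] at hlen; omega) hS']
      omega

lemma mem_cascade_of_toColex_lt (hL : L.IsChain (· > ·)) {S T : Finset ℕ}
    (hS : S ∈ cascade L j) (hT : #T = j) (hTS : toColex T < toColex S) : T ∈ cascade L j := by
  induction L generalizing j S T with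
  | nil => simp [cascade] at hS
  | cons a l ih =>
    have hSa : ∀ x ∈ S, x < a + 1 := fun x hx => mem_range.1 <|
      subset_range_of_mem_cascade (hL.cons_cons (Nat.lt_succ_self a)) hS hx
    rw [cascade, mem_union] at hS ⊢
    by_cases haT : a ∈ T
    · rcases hS with hS | hS
      · have := forall_lt_mono hTS.le fun x hx => mem_range.1 ((mem_powersetCard.1 hS).1 hx)
        exact absurd (this a haT) (lt_irrefl a)
      obtain ⟨S', hS', rfl⟩ := mem_image.1 hS
      have hTS' : toColex (T.erase a) < toColex S' := by
        rwa [← erase_insert (notMem_of_mem_cascade hL hS'), ← sdiff_singleton_eq_erase,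
          ← sdiff_singleton_eq_erase, toColex_sdiff_lt_toColex_sdiff
          (singleton_subset_iff.2 haT) (singleton_subset_iff.2 (mem_insert_self a S'))]
      refine Or.inr (mem_image.2 ⟨T.erase a, ih hL.tail hS' ?_ hTS', insert_erase haT⟩)
      rw [card_erase_of_mem haT, hT]
    · refine Or.inl (mem_powersetCard.2 ⟨fun x hx => mem_range.2 ?_, hT⟩)
      exact lt_of_le_of_ne (Nat.lt_succ_iff.1 (forall_lt_mono hTS.le hSa x hx))
        fun h => haT (h ▸ hx)

lemma isInitSeg_cascade (hL : L.IsChain (· > ·)) (hlen : L.length ≤ j + 1) :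
    IsInitSeg (cascade L j) j :=
  ⟨sized_cascade hL hlen, fun _ _ hS ⟨hTS, hT⟩ => mem_cascade_of_toColex_lt hL hS hT hTS⟩

lemma cascade_subset_shadow (hL : L.IsChain (· > ·)) (hlen : L.length ≤ j + 1)
    (hlast : j + 1 - (L.length - 1) ≤ L.getLastD 0) :
    cascade L j ⊆ ∂ (cascade L (j + 1)) := by
  induction L generalizing j with
  | nil => simp [cascade]
  | cons a l ih =>
    intro w hw
    rw [mem_shadow_iff_insert_mem]
    rw [cascade, mem_union] at hw
    rcases hw with hw | hw
    · obtain ⟨hwa, rfl⟩ := mem_powersetCard.1 hw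
      obtain ⟨x, hx, hxw⟩ : ∃ x ∈ range a, x ∉ w := exists_mem_notMem_of_card_lt_card <| by
        have := List.getLastD_add_length_le_of_isChain_gt hL
        rw [List.getLastD_cons] at hlast
        simp only [List.length_cons] at hlen hlast
        rw [card_range]
        omega
      refine ⟨x, hxw, mem_union_left _ (mem_powersetCard.2 ⟨insert_subset hx hwa, ?_⟩)⟩
      rw [card_insert_of_notMem hxw]
    · obtain ⟨w', hw', rfl⟩ := mem_image.1 hw
      have hl : l ≠ [] := by rintro rfl; simp [cascade] at hw'
      obtain ⟨b, l', rfl⟩ := List.exists_cons_of_ne_nil hl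
      simp only [List.length_cons, List.getLastD_cons] at hlen hlast
      have hj : j - 1 + 1 = j := by omega
      obtain ⟨x, hxw', hx⟩ := mem_shadow_iff_insert_mem.1 <|
        ih hL.tail (by simp only [List.length_cons]; omega)
          (by simp only [List.length_cons, List.getLastD_cons]; omega) hw'
      rw [hj] at hx
      have hxa : x ≠ a :=
        (mem_range.1 (subset_range_of_mem_cascade hL hx (mem_insert_self x w'))).ne
      refine ⟨x, by simp [hxa, hxw'], mem_union_right _ (mem_image.2 ⟨insert x w', ?_, ?_⟩)⟩
      · simpa using hx
      · exact insert_comm _ _ _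

lemma shadow_filter_card_subset {α : Type*} [DecidableEq α] {Δ : Finset (Finset α)}
    (hΔ : ∀ B ∈ Δ, ∀ A ⊆ B, A ∈ Δ) (k : ℕ) :
    ∂ (Δ.filter fun s => #s = k + 1) ⊆ Δ.filter fun s => #s = k := by
  intro t ht
  obtain ⟨s, hs, a, ha, rfl⟩ := mem_shadow_iff.1 ht
  obtain ⟨hsΔ, hs⟩ := mem_filter.1 hs
  exact mem_filter.2 ⟨hΔ s hsΔ _ (erase_subset a s), by rw [card_erase_of_mem ha, hs]; rfl⟩

/-- The cascade `m = C(n_k,k) + … + C(n_{k-s},k-s)` is encoded as the list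
`L = [n_k, n_{k-1}, …, n_{k-s}]`. -/
theorem stmt18_general {V : Type*} [DecidableEq V] (Δ : Finset (Finset V))
    (hΔ : ∀ B ∈ Δ, ∀ A ⊆ B, A ∈ Δ)
    (k : ℕ) (hk : 2 ≤ k)
    (L : List ℕ)
    (hsum : faceCount Δ k = ∑ i ∈ Finset.range L.length, Nat.choose (L.getD i 0) (k - i))
    (hchain : L.Chain' (· > ·))
    (hlen : L.length ≤ k)
    (hlast : k - (L.length - 1) ≤ L.getLastD 0) :
    faceCount Δ (k - 1) ≥
      ∑ i ∈ Finset.range L.length, Nat.choose (L.getD i 0) (k - 1 - i) := by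
  obtain ⟨j, rfl⟩ : ∃ j, k = j + 1 := ⟨k - 1, by omega⟩
  have hcard : #(cascade L (j + 1)) = #(Δ.filter fun s => #s = j + 1) :=
    (card_cascade hchain).trans hsum.symm
  calc ∑ i ∈ range L.length, (L.getD i 0).choose (j + 1 - 1 - i)
      = #(cascade L j) := by rw [card_cascade hchain, Nat.add_sub_cancel]
    _ ≤ #(∂ (cascade L (j + 1))) := card_le_card (cascade_subset_shadow hchain hlen hlast)
    _ ≤ #(∂ (Δ.filter fun s => #s = j + 1)) :=
        kruskal_katona_of_isInitSeg_nat (fun _ hs => (mem_filter.1 hs).2) hcard.le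
          (isInitSeg_cascade hchain (by omega))
    _ ≤ faceCount Δ (j + 1 - 1) := card_le_card (shadow_filter_card_subset hΔ j)

/-- Kruskal–Katona, inequality direction.  The cascade `m = C(n_k,k) + … + C(n_{k-s},k-s)`
is encoded as the list `L = [n_k, n_{k-1}, …, n_{k-s}]` (so `s = L.length - 1`). -/
theorem stmt18 {V : Type*} [DecidableEq V] (Δ : Finset (Finset V))
    (hΔ : ∀ B ∈ Δ, ∀ A ⊆ B, A ∈ Δ)
    (k : ℕ) (hk : 2 ≤ k) (hm : 0 < faceCount Δ k)
    (L : List ℕ) (hL : L ≠ [])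
    (hsum : faceCount Δ k = ∑ i ∈ Finset.range L.length, Nat.choose (L.getD i 0) (k - i))
    (hchain : L.Chain' (· > ·))
    (hlen : L.length ≤ k)
    (hlast : k - (L.length - 1) ≤ L.getLastD 0) :
    faceCount Δ (k - 1) ≥
      ∑ i ∈ Finset.range L.length, Nat.choose (L.getD i 0) (k - 1 - i) :=
  stmt18_general Δ hΔ k hk L hsum hchain hlen hlast
end Cascade
end
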